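/- arXiv:1901.01870 — 4 statements merged into one kernel-verified Lean document; each statement's English description precedes it below -/
import Mathlib

section
/- For every integer d ≥ 1 there exists a finite set T of pairwise distinct line segment curves in ℝ^d (curves of the form t ↦ (1−t)p + tq) such that no map f: T → ℝ^d is an isometric embedding of (T, d_F) into Euclidean ℝ^d; that is, there is no f with ‖f(σ) − f(σ′)‖ = d_F(σ, σ′) for all σ, σ′ ∈ T. -/
/-- The Fréchet distance between two curves `τ σ : ℝ → ℝ^d` (viewed as curves on `[0,1]`). -/
noncomputable def frechetDist {d : ℕ} (τ σ : ℝ → EuclideanSpace ℝ (Fin d)) : ℝ :=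
  sInf { r : ℝ | ∃ f : ℝ → ℝ, ContinuousOn f (Set.Icc 0 1) ∧
    MonotoneOn f (Set.Icc 0 1) ∧ Set.InjOn f (Set.Icc 0 1) ∧
    Set.MapsTo f (Set.Icc 0 1) (Set.Icc 0 1) ∧ f 0 = 0 ∧ f 1 = 1 ∧
    r = ⨆ t : Set.Icc (0 : ℝ) 1, dist (τ (f (t : ℝ))) (σ (t : ℝ)) }

/-- The line segment curve `t ↦ (1−t)p + tq`. -/
noncomputable def seg {d : ℕ} (p q : EuclideanSpace ℝ (Fin d)) : ℝ → EuclideanSpace ℝ (Fin d) :=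
  fun t => (1 - t) • p + t • q

lemma seg_zero {d : ℕ} (p q : EuclideanSpace ℝ (Fin d)) : seg p q 0 = p := by
  simp [seg]

lemma seg_one {d : ℕ} (p q : EuclideanSpace ℝ (Fin d)) : seg p q 1 = q := by
  simp [seg]

lemma dist_seg_le {d : ℕ} (p q p' q' : EuclideanSpace ℝ (Fin d)) {t : ℝ}
    (ht : t ∈ Set.Icc (0:ℝ) 1) :
    dist (seg p q t) (seg p' q' t) ≤ max ‖p - p'‖ ‖q - q'‖ := by
  have h : seg p q t - seg p' q' t = (1 - t) • (p - p') + t • (q - q') := by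
    simp only [seg]; module
  rw [dist_eq_norm, h]
  calc ‖(1 - t) • (p - p') + t • (q - q')‖
      ≤ ‖(1 - t) • (p - p')‖ + ‖t • (q - q')‖ := norm_add_le _ _
    _ = (1 - t) * ‖p - p'‖ + t * ‖q - q'‖ := by
        rw [norm_smul, norm_smul, Real.norm_of_nonneg (by linarith [ht.2]),
          Real.norm_of_nonneg ht.1]
    _ ≤ (1 - t) * max ‖p - p'‖ ‖q - q'‖ + t * max ‖p - p'‖ ‖q - q'‖ := by
        gcongr
        · linarith [ht.2]
        · exact le_max_left _ _
        · exact ht.1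
        · exact le_max_right _ _
    _ = max ‖p - p'‖ ‖q - q'‖ := by ring

lemma norm_seg_le {d : ℕ} (p q : EuclideanSpace ℝ (Fin d)) {t : ℝ}
    (ht : t ∈ Set.Icc (0:ℝ) 1) : ‖seg p q t‖ ≤ ‖p‖ + ‖q‖ := by
  calc ‖(1 - t) • p + t • q‖ ≤ ‖(1 - t) • p‖ + ‖t • q‖ := norm_add_le _ _
    _ = (1 - t) * ‖p‖ + t * ‖q‖ := by
        rw [norm_smul, norm_smul, Real.norm_of_nonneg (by linarith [ht.2]),
          Real.norm_of_nonneg ht.1]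
    _ ≤ ‖p‖ + ‖q‖ := by nlinarith [norm_nonneg p, norm_nonneg q, ht.1, ht.2]

/-- The Fréchet distance between segments equals the max of endpoint distances. -/
lemma frechetDist_seg {d : ℕ} (p q p' q' : EuclideanSpace ℝ (Fin d)) :
    frechetDist (seg p q) (seg p' q') = max ‖p - p'‖ ‖q - q'‖ := by
  set M := max ‖p - p'‖ ‖q - q'‖ with hM
  set S := { r : ℝ | ∃ f : ℝ → ℝ, ContinuousOn f (Set.Icc 0 1) ∧
    MonotoneOn f (Set.Icc 0 1) ∧ Set.InjOn f (Set.Icc 0 1) ∧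
    Set.MapsTo f (Set.Icc 0 1) (Set.Icc 0 1) ∧ f 0 = 0 ∧ f 1 = 1 ∧
    r = ⨆ t : Set.Icc (0 : ℝ) 1,
      dist (seg p q (f (t : ℝ))) (seg p' q' (t : ℝ)) } with hS
  -- every element of S is at least M
  have hlb : ∀ r ∈ S, M ≤ r := by
    rintro r ⟨f, _, _, _, hmaps, hf0, hf1, hr⟩
    have hbdd : BddAbove (Set.range fun t : Set.Icc (0:ℝ) 1 =>
        dist (seg p q (f (t : ℝ))) (seg p' q' (t : ℝ))) := by
      refine ⟨‖p‖ + ‖q‖ + (‖p'‖ + ‖q'‖), ?_⟩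
      rintro x ⟨t, rfl⟩
      calc dist (seg p q (f (t : ℝ))) (seg p' q' (t : ℝ))
          ≤ ‖seg p q (f (t : ℝ))‖ + ‖seg p' q' (t : ℝ)‖ := dist_le_norm_add_norm _ _
        _ ≤ ‖p‖ + ‖q‖ + (‖p'‖ + ‖q'‖) := by
            gcongr
            · exact norm_seg_le p q (hmaps t.2)
            · exact norm_seg_le p' q' t.2
    have h0 : dist (seg p q (f ((0:ℝ)))) (seg p' q' (0:ℝ)) = ‖p - p'‖ := by
      rw [hf0, seg_zero, seg_zero, dist_eq_norm]
    have h1 : dist (seg p q (f ((1:ℝ)))) (seg p' q' (1:ℝ)) = ‖q - q'‖ := by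
      rw [hf1, seg_one, seg_one, dist_eq_norm]
    have le0 : ‖p - p'‖ ≤ r := by
      rw [hr]
      have := le_ciSup hbdd (⟨0, by norm_num⟩ : Set.Icc (0:ℝ) 1)
      simpa [h0] using this
    have le1 : ‖q - q'‖ ≤ r := by
      rw [hr]
      have := le_ciSup hbdd (⟨1, by norm_num⟩ : Set.Icc (0:ℝ) 1)
      simpa [h1] using this
    exact max_le le0 le1
  -- M is attained using the identity reparametrization
  have hmem : M ∈ S := by
    refine ⟨id, continuousOn_id, monotoneOn_id, Set.injOn_id _, Set.mapsTo_id _, rfl, rfl, ?_⟩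
    have hbdd : BddAbove (Set.range fun t : Set.Icc (0:ℝ) 1 =>
        dist (seg p q ((t : ℝ))) (seg p' q' (t : ℝ))) := by
      refine ⟨M, ?_⟩
      rintro x ⟨t, rfl⟩
      exact dist_seg_le p q p' q' t.2
    refine (le_antisymm (ciSup_le fun t => dist_seg_le p q p' q' t.2) (max_le ?_ ?_)).symm
    · have := le_ciSup hbdd (⟨0, by norm_num⟩ : Set.Icc (0:ℝ) 1)
      simpa [seg_zero, dist_eq_norm] using this
    · have := le_ciSup hbdd (⟨1, by norm_num⟩ : Set.Icc (0:ℝ) 1)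
      simpa [seg_one, dist_eq_norm] using this
  exact le_antisymm (csInf_le ⟨M, hlb⟩ hmem) (le_csInf ⟨M, hmem⟩ hlb)

/-- for every `d ≥ 1` there is a finite set `T` of line segment curves in `ℝ^d`
such that no map `f : T → ℝ^d` is an isometric embedding of `(T, d_F)` into Euclidean `ℝ^d`. -/
theorem exists_curve_set_with_no_isometric_embedding :
    ∀ d : ℕ, 1 ≤ d →
      ∃ T : Finset (ℝ → EuclideanSpace ℝ (Fin d)),
        T.Nonempty ∧
        (∀ σ ∈ T, ∃ p q : EuclideanSpace ℝ (Fin d), σ = seg p q) ∧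
        ¬ ∃ f : (ℝ → EuclideanSpace ℝ (Fin d)) → EuclideanSpace ℝ (Fin d),
            ∀ σ ∈ T, ∀ σ' ∈ T, dist (f σ) (f σ') = frechetDist σ σ' := by
  classical
  intro d hd
  set E := EuclideanSpace ℝ (Fin d)
  set u : E := EuclideanSpace.single (⟨0, hd⟩ : Fin d) (1:ℝ) with hu
  have hnu : ‖u‖ = 1 := by rw [hu, EuclideanSpace.norm_single]; norm_num
  set A : ℝ → E := seg 0 0 with hA
  set B : ℝ → E := seg ((2:ℝ) • u) 0 with hB
  set Mc : ℝ → E := seg u u with hMc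
  set Mc' : ℝ → E := seg u 0 with hMc'
  refine ⟨{A, B, Mc, Mc'}, ⟨A, by simp⟩, ?_, ?_⟩
  · intro σ hσ
    simp only [Finset.mem_insert, Finset.mem_singleton] at hσ
    rcases hσ with rfl | rfl | rfl | rfl
    exacts [⟨0, 0, rfl⟩, ⟨(2:ℝ) • u, 0, rfl⟩, ⟨u, u, rfl⟩, ⟨u, 0, rfl⟩]
  · rintro ⟨f, hf⟩
    have hAm : A ∈ ({A, B, Mc, Mc'} : Finset (ℝ → E)) := by simp
    have hBm : B ∈ ({A, B, Mc, Mc'} : Finset (ℝ → E)) := by simp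
    have hMm : Mc ∈ ({A, B, Mc, Mc'} : Finset (ℝ → E)) := by simp
    have hM'm : Mc' ∈ ({A, B, Mc, Mc'} : Finset (ℝ → E)) := by simp
    have h2u : ‖(0:E) - (2:ℝ) • u‖ = 2 := by
      rw [zero_sub, norm_neg, norm_smul, hnu]; norm_num
    have hu2u : ‖u - (2:ℝ) • u‖ = 1 := by
      have h : u - (2:ℝ) • u = -u := by module
      rw [h, norm_neg, hnu]
    have h0u : ‖(0:E) - u‖ = 1 := by rw [zero_sub, norm_neg, hnu]
    have hsub0 : ∀ x : E, ‖x - 0‖ = ‖x‖ := fun x => by rw [sub_zero]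
    have dAB : dist (f A) (f B) = 2 := by
      rw [hf A hAm B hBm, hA, hB, frechetDist_seg, h2u]
      simp [norm_zero]
    have dAM : dist (f A) (f Mc) = 1 := by
      rw [hf A hAm Mc hMm, hA, hMc, frechetDist_seg, h0u]; simp
    have dMB : dist (f Mc) (f B) = 1 := by
      rw [hf Mc hMm B hBm, hMc, hB, frechetDist_seg, hu2u, hsub0, hnu]; simp
    have dAM' : dist (f A) (f Mc') = 1 := by
      rw [hf A hAm Mc' hM'm, hA, hMc', frechetDist_seg, h0u]
      simp [norm_zero]
    have dM'B : dist (f Mc') (f B) = 1 := by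
      rw [hf Mc' hM'm B hBm, hMc', hB, frechetDist_seg, hu2u]
      simp [norm_zero]
    have dMM' : dist (f Mc) (f Mc') = 1 := by
      rw [hf Mc hMm Mc' hM'm, hMc, hMc', frechetDist_seg, hsub0, hnu]
      simp
    have hm : f Mc = midpoint ℝ (f A) (f B) :=
      eq_midpoint_of_dist_eq_half (by rw [dAM, dAB]; norm_num)
        (by rw [dMB, dAB]; norm_num)
    have hm' : f Mc' = midpoint ℝ (f A) (f B) :=
      eq_midpoint_of_dist_eq_half (by rw [dAM', dAB]; norm_num)
        (by rw [dM'B, dAB]; norm_num)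
    rw [hm, hm', dist_self] at dMM'
    norm_num at dMM'
end

section
/- Let Ω be a finite nonempty sample space with probability mass function φ (φ(ω) > 0 for all ω), let X_1, …, X_w: Ω → ℝ_{≥0} be nonnegative functions with E_φ[X_i] > 0 for all i, define the sensitivity ξ(ω) = max_{i∈{1,…,w}} X_i(ω)/E_φ[X_i], let λ: Ω → ℝ_{>0} satisfy λ(ω) ≥ ξ(ω) for all ω, set Λ = ∑_{ω∈Ω} λ(ω)·φ(ω), and define ψ(ω) = (λ(ω)/Λ)·φ(ω) and Y_i(ω) = X_i(ω)·φ(ω)/ψ(ω). Then for every i ∈ {1, …, w}, the variance under ψ satisfies Var_ψ[Y_i] ≤ (Λ − 1)·E_ψ[Y_i]², where Var_ψ[Y_i] = ∑_{ω∈Ω} (Y_i(ω) − E_ψ[Y_i])²·ψ(ω). -/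
/-- in the sensitivity sampling framework, the reweighted random variables
`Y_i(ω) = X_i(ω)·φ(ω)/ψ(ω)` have variance `Var_ψ[Y_i] ≤ (Λ − 1)·E_ψ[Y_i]²` under the
distribution `ψ(ω) = (λ(ω)/Λ)·φ(ω)`, where `λ` is an upper bound on the sensitivities
`ξ(ω) = max_i X_i(ω)/E_φ[X_i]` and `Λ = ∑_ω λ(ω)·φ(ω)`. -/
theorem sensitivity_sampling_variance_bound
    {Ω : Type*} [Fintype Ω] [Nonempty Ω]
    (φ : Ω → ℝ) (hφpos : ∀ ω, 0 < φ ω) (hφsum : ∑ ω, φ ω = 1)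
    (w : ℕ) (hw : 0 < w)
    (X : Fin w → Ω → ℝ) (hX : ∀ i ω, 0 ≤ X i ω)
    (hEX : ∀ i, 0 < ∑ ω, X i ω * φ ω)
    (lam : Ω → ℝ) (hlampos : ∀ ω, 0 < lam ω)
    (hlam : ∀ ω i, X i ω / (∑ ω', X i ω' * φ ω') ≤ lam ω)
    (Λ : ℝ) (hΛ : Λ = ∑ ω, lam ω * φ ω)
    (ψ : Ω → ℝ) (hψ : ∀ ω, ψ ω = lam ω / Λ * φ ω)
    (Y : Fin w → Ω → ℝ) (hY : ∀ i ω, Y i ω = X i ω * φ ω / ψ ω) :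
    ∀ i : Fin w,
      ∑ ω, (Y i ω - ∑ ω', Y i ω' * ψ ω') ^ 2 * ψ ω ≤
        (Λ - 1) * (∑ ω', Y i ω' * ψ ω') ^ 2 := by
  intro i
  have hΛpos : 0 < Λ := by
    rw [hΛ]
    exact Finset.sum_pos (fun ω _ => mul_pos (hlampos ω) (hφpos ω)) Finset.univ_nonempty
  have hψpos : ∀ ω, 0 < ψ ω := fun ω => by
    rw [hψ]; exact mul_pos (div_pos (hlampos ω) hΛpos) (hφpos ω)
  set μ := ∑ ω, X i ω * φ ω with hμ
  have hμpos : 0 < μ := hEX i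
  have hYψ : ∀ ω, Y i ω * ψ ω = X i ω * φ ω := fun ω => by
    rw [hY]; exact div_mul_cancel₀ _ (hψpos ω).ne'
  have hE : (∑ ω', Y i ω' * ψ ω') = μ := by
    simp_rw [hYψ]
    rfl
  have hsumψ : ∑ ω, ψ ω = 1 := by
    simp_rw [hψ, div_mul_eq_mul_div, ← Finset.sum_div, ← hΛ]
    exact div_self hΛpos.ne'
  rw [hE]
  have hexp : ∑ ω, (Y i ω - μ) ^ 2 * ψ ω
      = (∑ ω, Y i ω ^ 2 * ψ ω) - μ ^ 2 := by
    have : ∀ ω, (Y i ω - μ) ^ 2 * ψ ω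
        = Y i ω ^ 2 * ψ ω - 2 * μ * (Y i ω * ψ ω) + μ ^ 2 * ψ ω := by
      intro ω; ring
    simp_rw [this, Finset.sum_add_distrib, Finset.sum_sub_distrib,
      ← Finset.mul_sum, hE, hsumψ]
    ring
  rw [hexp]
  have hbound : (∑ ω, Y i ω ^ 2 * ψ ω) ≤ Λ * μ ^ 2 := by
    have h1 : ∀ ω, Y i ω ^ 2 * ψ ω = X i ω ^ 2 * φ ω * Λ / lam ω := by
      intro ω
      rw [hY, hψ]
      have hl := (hlampos ω).ne'
      have hp := (hφpos ω).ne'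
      field_simp
    have h2 : ∀ ω, X i ω ^ 2 * φ ω * Λ / lam ω ≤ Λ * μ * (X i ω * φ ω) := by
      intro ω
      have hXle : X i ω ≤ lam ω * μ := by
        have := hlam ω i
        rw [← hμ] at this
        rw [div_le_iff₀ hμpos] at this
        linarith
      rw [div_le_iff₀ (hlampos ω)]
      have : X i ω ^ 2 * φ ω * Λ = Λ * (X i ω * φ ω) * X i ω := by ring
      rw [this]
      have : Λ * μ * (X i ω * φ ω) * lam ω = Λ * (X i ω * φ ω) * (lam ω * μ) := by ring
      rw [this]
      apply mul_le_mul_of_nonneg_left hXle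
      exact mul_nonneg hΛpos.le (mul_nonneg (hX i ω) (hφpos ω).le)
    calc ∑ ω, Y i ω ^ 2 * ψ ω = ∑ ω, X i ω ^ 2 * φ ω * Λ / lam ω := by simp_rw [h1]
      _ ≤ ∑ ω, Λ * μ * (X i ω * φ ω) := Finset.sum_le_sum (fun ω _ => h2 ω)
      _ = Λ * μ * μ := by rw [← Finset.mul_sum]
      _ = Λ * μ ^ 2 := by ring
  nlinarith [hbound]
end

section
/- Let T be a finite set of n curves with the Fréchet metric d_F, let C_1, …, C_w enumerate all k-element subsets of T, define X_i(τ) = min_{c∈C_i} d_F(τ, c), let φ be the uniform distribution on T, let Ĉ = {ĉ_1, …, ĉ_k} ⊆ T be a center-set whose clusters U_1, …, U_k partition T (each nonempty), let m_j = (1/φ(U_j))·∑_{τ∈U_j} d_F(τ, ĉ_j)·φ(τ), and let Φ > 0 satisfy Φ ≤ E_φ[X_i] for all i ∈ {1, …, w}. Then for every γ ∈ (0,1), every j ∈ {1, …, k} and every τ ∈ U_j, the sensitivity ξ(τ) = max_{i∈{1,…,w}} X_i(τ)/E_φ[X_i] satisfies ξ(τ) ≤ (2m_j + d_F(τ, ĉ_j))/((1−γ)Φ)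 + 2/(γ·φ(U_j)). -/
namespace FrechetAux

open Set Filter Topology

def Reparam (f : ℝ → ℝ) : Prop :=
  ContinuousOn f (Set.Icc 0 1) ∧ MonotoneOn f (Set.Icc 0 1) ∧ Set.InjOn f (Set.Icc 0 1) ∧
    Set.MapsTo f (Set.Icc 0 1) (Set.Icc 0 1) ∧ f 0 = 0 ∧ f 1 = 1

variable {d : ℕ}

noncomputable def fSup (τ σ : ℝ → EuclideanSpace ℝ (Fin d)) (f : ℝ → ℝ) : ℝ :=
  ⨆ t : Set.Icc (0 : ℝ) 1, dist (τ (f (t : ℝ))) (σ (t : ℝ))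

def DSet (τ σ : ℝ → EuclideanSpace ℝ (Fin d)) : Set ℝ :=
  { r : ℝ | ∃ f : ℝ → ℝ, Reparam f ∧ r = fSup τ σ f }

lemma frechetDist_eq (τ σ : ℝ → EuclideanSpace ℝ (Fin d)) :
    frechetDist τ σ = sInf (DSet τ σ) := by
  unfold frechetDist DSet Reparam fSup
  congr 1
  ext r
  constructor
  · rintro ⟨f, h1, h2, h3, h4, h5, h6, h7⟩; exact ⟨f, ⟨h1, h2, h3, h4, h5, h6⟩, h7⟩
  · rintro ⟨f, ⟨h1, h2, h3, h4, h5, h6⟩, h7⟩; exact ⟨f, h1, h2, h3, h4, h5, h6, h7⟩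

lemma reparam_id : Reparam (id : ℝ → ℝ) :=
  ⟨continuousOn_id, monotoneOn_id, Set.injOn_id _, Set.mapsTo_id _, rfl, rfl⟩

lemma fSup_nonneg (τ σ : ℝ → EuclideanSpace ℝ (Fin d)) (f : ℝ → ℝ) : 0 ≤ fSup τ σ f :=
  Real.iSup_nonneg fun _ => dist_nonneg

lemma DSet_nonempty (τ σ : ℝ → EuclideanSpace ℝ (Fin d)) : (DSet τ σ).Nonempty :=
  ⟨fSup τ σ id, id, reparam_id, rfl⟩

lemma DSet_bddBelow (τ σ : ℝ → EuclideanSpace ℝ (Fin d)) : BddBelow (DSet τ σ) := by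
  refine ⟨0, fun r hr => ?_⟩
  obtain ⟨f, _, rfl⟩ := hr
  exact fSup_nonneg τ σ f

lemma frechetDist_nonneg (τ σ : ℝ → EuclideanSpace ℝ (Fin d)) : 0 ≤ frechetDist τ σ := by
  rw [frechetDist_eq]
  exact le_csInf (DSet_nonempty τ σ) fun r hr => by
    obtain ⟨f, _, rfl⟩ := hr; exact fSup_nonneg τ σ f

lemma frechetDist_le (τ σ : ℝ → EuclideanSpace ℝ (Fin d)) {f : ℝ → ℝ} (hf : Reparam f) :
    frechetDist τ σ ≤ fSup τ σ f := by
  rw [frechetDist_eq]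
  exact csInf_le (DSet_bddBelow τ σ) ⟨f, hf, rfl⟩

lemma frechetDist_self (τ : ℝ → EuclideanSpace ℝ (Fin d)) : frechetDist τ τ = 0 := by
  refine le_antisymm ?_ (frechetDist_nonneg τ τ)
  have h := frechetDist_le τ τ reparam_id
  have : fSup τ τ id = 0 := by
    unfold fSup
    have : ∀ t : Set.Icc (0:ℝ) 1, dist (τ (id (t:ℝ))) (τ (t:ℝ)) = 0 := fun t => by simp
    rw [show (fun t : Set.Icc (0:ℝ) 1 => dist (τ (id (t:ℝ))) (τ (t:ℝ))) = fun _ => (0:ℝ) from funext this]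
    exact ciSup_const
  linarith

lemma exists_reparam_lt {τ σ : ℝ → EuclideanSpace ℝ (Fin d)} {r : ℝ}
    (h : frechetDist τ σ < r) : ∃ f : ℝ → ℝ, Reparam f ∧ fSup τ σ f < r := by
  rw [frechetDist_eq] at h
  obtain ⟨x, hx, hxr⟩ := exists_lt_of_csInf_lt (DSet_nonempty τ σ) h
  obtain ⟨f, hf, rfl⟩ := hx
  exact ⟨f, hf, hxr⟩

/-- goodness of a pair: every reparametrized distance family is bounded above. -/
def Tame (τ σ : ℝ → EuclideanSpace ℝ (Fin d)) : Prop :=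
  ∀ f : ℝ → ℝ, Reparam f →
    BddAbove (Set.range fun t : Set.Icc (0:ℝ) 1 => dist (τ (f (t:ℝ))) (σ (t:ℝ)))

def BddCurve (τ : ℝ → EuclideanSpace ℝ (Fin d)) : Prop :=
  ∃ M : ℝ, ∀ t ∈ Set.Icc (0:ℝ) 1, ‖τ t‖ ≤ M

lemma tame_of_bdd {τ σ : ℝ → EuclideanSpace ℝ (Fin d)} (hτ : BddCurve τ) (hσ : BddCurve σ) :
    Tame τ σ := by
  obtain ⟨M1, h1⟩ := hτ
  obtain ⟨M2, h2⟩ := hσ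
  intro f hf
  refine ⟨M1 + M2, fun x hx => ?_⟩
  obtain ⟨t, rfl⟩ := hx
  calc dist (τ (f (t:ℝ))) (σ (t:ℝ)) ≤ ‖τ (f (t:ℝ))‖ + ‖σ (t:ℝ)‖ := dist_le_norm_add_norm _ _
  _ ≤ M1 + M2 := add_le_add (h1 _ (hf.2.2.2.1 t.2)) (h2 _ t.2)

lemma le_fSup {τ σ : ℝ → EuclideanSpace ℝ (Fin d)} {f : ℝ → ℝ} (hf : Reparam f)
    (h : Tame τ σ) (t : Set.Icc (0:ℝ) 1) :
    dist (τ (f (t:ℝ))) (σ (t:ℝ)) ≤ fSup τ σ f :=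
  le_ciSup (h f hf) t


lemma monoOn_injOn_strict {f : ℝ → ℝ} (hm : MonotoneOn f (Set.Icc 0 1))
    (hi : Set.InjOn f (Set.Icc 0 1)) : StrictMonoOn f (Set.Icc 0 1) := by
  intro x hx y hy hxy
  rcases lt_or_eq_of_le (hm hx hy hxy.le) with h | h
  · exact h
  · exact absurd (hi hx hy h) (ne_of_lt hxy)

/-- global extension of a reparametrization, strictly monotone and surjective on ℝ. -/
lemma reparam_global {f : ℝ → ℝ} (hc : ContinuousOn f (Set.Icc 0 1))
    (hm : MonotoneOn f (Set.Icc 0 1)) (hi : Set.InjOn f (Set.Icc 0 1))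
    (hmaps : Set.MapsTo f (Set.Icc 0 1) (Set.Icc 0 1)) (h0 : f 0 = 0) (h1 : f 1 = 1) :
    ∃ g : ℝ → ℝ, (ContinuousOn g (Set.Icc 0 1) ∧ MonotoneOn g (Set.Icc 0 1) ∧
      Set.InjOn g (Set.Icc 0 1) ∧ Set.MapsTo g (Set.Icc 0 1) (Set.Icc 0 1) ∧ g 0 = 0 ∧ g 1 = 1) ∧
      (∀ t ∈ Set.Icc (0:ℝ) 1, f (g t) = t) ∧ (∀ t ∈ Set.Icc (0:ℝ) 1, g (f t) = t) := by
  classical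
  set F : ℝ → ℝ := fun x => if x ≤ 0 then x else if 1 ≤ x then x else f x with hF
  have hsm := monoOn_injOn_strict hm hi
  have hFeq : ∀ x ∈ Set.Icc (0:ℝ) 1, F x = f x := by
    intro x hx
    rcases hx with ⟨hx0, hx1⟩
    by_cases h : x ≤ 0
    · have : x = 0 := le_antisymm h hx0
      simp [hF, this, h0]
    · by_cases h' : (1:ℝ) ≤ x
      · have : x = 1 := le_antisymm hx1 h'
        simp [hF, this, h1]
      · simp [hF, h, h']
  have hfmem : ∀ x ∈ Set.Icc (0:ℝ) 1, f x ∈ Set.Icc (0:ℝ) 1 := fun x hx => hmaps hx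
  have hFsm : StrictMono F := by
    intro x y hxy
    by_cases hx0 : x ≤ 0
    · by_cases hy0 : y ≤ 0
      · simpa [hF, hx0, hy0] using hxy
      · push_neg at hy0
        have hx : F x = x := by simp [hF, hx0]
        by_cases hy1 : (1:ℝ) ≤ y
        · have : F y = y := by simp [hF, not_le.mpr hy0, hy1]
          rw [hx, this]; exact hxy
        · push_neg at hy1
          have : F y = f y := hFeq y ⟨hy0.le, hy1.le⟩
          rw [hx, this]
          calc x ≤ 0 := hx0
          _ = f 0 := h0.symm
          _ < f y := hsm ⟨le_refl 0, zero_le_one⟩ ⟨hy0.le, hy1.le⟩ hy0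
    · push_neg at hx0
      by_cases hx1 : (1:ℝ) ≤ x
      · have hy1 : (1:ℝ) ≤ y := le_trans hx1 hxy.le
        have : F x = x := by simp [hF, not_le.mpr hx0, hx1]
        have hy' : F y = y := by simp [hF, not_le.mpr (lt_trans hx0 hxy), hy1]
        rw [this, hy']; exact hxy
      · push_neg at hx1
        have hx : F x = f x := hFeq x ⟨hx0.le, hx1.le⟩
        by_cases hy1 : (1:ℝ) ≤ y
        · have hy' : F y = y := by simp [hF, not_le.mpr (lt_trans hx0 hxy), hy1]
          rw [hx, hy']
          calc f x < f 1 := hsm ⟨hx0.le, hx1.le⟩ ⟨zero_le_one, le_refl 1⟩ hx1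
          _ = 1 := h1
          _ ≤ y := hy1
        · push_neg at hy1
          have hy0 : (0:ℝ) < y := lt_trans hx0 hxy
          have hy : F y = f y := hFeq y ⟨hy0.le, hy1.le⟩
          rw [hx, hy]
          exact hsm ⟨hx0.le, hx1.le⟩ ⟨hy0.le, hy1.le⟩ hxy
  have hFsurj : Function.Surjective F := by
    intro y
    by_cases hy0 : y ≤ 0
    · exact ⟨y, by simp [hF, hy0]⟩
    · by_cases hy1 : (1:ℝ) ≤ y
      · refine ⟨y, ?_⟩
        push_neg at hy0
        simp [hF, not_le.mpr hy0, hy1]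
      · push_neg at hy0; push_neg at hy1
        have hsub : Set.Icc (0:ℝ) 1 ⊆ f '' Set.Icc 0 1 := by
          have := intermediate_value_Icc (zero_le_one (α := ℝ)) hc
          rwa [h0, h1] at this
        obtain ⟨x, hx, hfx⟩ := hsub ⟨hy0.le, hy1.le⟩
        exact ⟨x, by rw [hFeq x hx]; exact hfx⟩
  set e := StrictMono.orderIsoOfSurjective F hFsm hFsurj with he
  set g : ℝ → ℝ := fun y => e.symm y with hg
  have hgF : ∀ x, g (F x) = x := fun x => StrictMono.orderIsoOfSurjective_symm_apply_self F hFsm hFsurj x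
  have hFg : ∀ y, F (g y) = y := fun y => StrictMono.orderIsoOfSurjective_self_symm_apply F hFsm hFsurj y
  have hgc : Continuous g := OrderIso.continuous _
  have hgm : Monotone g := (e.symm).monotone
  have hg0 : g 0 = 0 := by
    have h' : g (F 0) = 0 := hgF 0
    have : F 0 = 0 := by simp [hF]
    rwa [this] at h'
  have hg1 : g 1 = 1 := by
    have h' : g (F 1) = 1 := hgF 1
    have : F 1 = 1 := by
      have := hFeq 1 ⟨zero_le_one, le_refl 1⟩
      rw [this, h1]
    rwa [this] at h'
  have hgmaps : MapsTo g (Set.Icc 0 1) (Set.Icc 0 1) := by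
    intro x hx
    constructor
    · rw [← hg0]; exact hgm hx.1
    · rw [← hg1]; exact hgm hx.2
  refine ⟨g, ⟨hgc.continuousOn, hgm.monotoneOn _, fun a _ b _ hab => e.symm.injective hab,
    hgmaps, hg0, hg1⟩, ?_, ?_⟩
  · intro t ht
    have := hFg t
    rwa [hFeq (g t) (hgmaps ht)] at this
  · intro t ht
    rw [← hFeq t ht, hgF]

end FrechetAux

namespace FrechetAux
open Set Filter Topology
variable {d : ℕ}

lemma reparam_inverse {f : ℝ → ℝ} (hf : Reparam f) :
    ∃ g : ℝ → ℝ, Reparam g ∧ (∀ t ∈ Set.Icc (0:ℝ) 1, f (g t) = t) ∧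
      (∀ t ∈ Set.Icc (0:ℝ) 1, g (f t) = t) := by
  obtain ⟨hc, hm, hi, hmaps, h0, h1⟩ := hf
  obtain ⟨g, hg, h2, h3⟩ := reparam_global hc hm hi hmaps h0 h1
  exact ⟨g, hg, h2, h3⟩

lemma le_of_forall_pos_le_add' {a b : ℝ} (h : ∀ ε : ℝ, 0 < ε → a ≤ b + ε) : a ≤ b := by
  by_contra hab
  push_neg at hab
  have := h ((a - b)/2) (by linarith)
  linarith

lemma frechetDist_symm_le {τ σ : ℝ → EuclideanSpace ℝ (Fin d)} (h : Tame τ σ) :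
    frechetDist σ τ ≤ frechetDist τ σ := by
  refine le_of_forall_pos_le_add' fun ε hε => ?_
  obtain ⟨f, hf, hfs⟩ := exists_reparam_lt (lt_add_of_pos_right (frechetDist τ σ) hε)
  obtain ⟨g, hg, hfg, hgf⟩ := reparam_inverse hf
  have key : fSup σ τ g ≤ fSup τ σ f := by
    refine Real.iSup_le (fun t => ?_) (fSup_nonneg τ σ f)
    have hgt : g (t:ℝ) ∈ Set.Icc (0:ℝ) 1 := hg.2.2.2.1 t.2
    have : dist (σ (g (t:ℝ))) (τ (t:ℝ)) = dist (τ (f (g (t:ℝ)))) (σ (g (t:ℝ))) := by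
      rw [hfg (t:ℝ) t.2, dist_comm]
    rw [this]
    exact le_fSup hf h ⟨g (t:ℝ), hgt⟩
  calc frechetDist σ τ ≤ fSup σ τ g := frechetDist_le σ τ hg
  _ ≤ fSup τ σ f := key
  _ ≤ frechetDist τ σ + ε := hfs.le

lemma frechetDist_symm {τ σ : ℝ → EuclideanSpace ℝ (Fin d)} (h1 : Tame τ σ) (h2 : Tame σ τ) :
    frechetDist τ σ = frechetDist σ τ :=
  le_antisymm (frechetDist_symm_le h2) (frechetDist_symm_le h1)

lemma reparam_comp {f g : ℝ → ℝ} (hf : Reparam f) (hg : Reparam g) : Reparam (f ∘ g) := by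
  obtain ⟨fc, fm, fi, fmaps, f0, f1⟩ := hf
  obtain ⟨gc, gm, gi, gmaps, g0, g1⟩ := hg
  refine ⟨fc.comp gc gmaps, ?_, fi.comp gi gmaps, fmaps.comp gmaps,
    by simp [Function.comp, g0, f0], by simp [Function.comp, g1, f1]⟩
  intro x hx y hy hxy
  exact fm (gmaps hx) (gmaps hy) (gm hx hy hxy)

lemma frechetDist_triangle {a b c : ℝ → EuclideanSpace ℝ (Fin d)}
    (hab : Tame a b) (hbc : Tame b c) :
    frechetDist a c ≤ frechetDist a b + frechetDist b c := by
  refine le_of_forall_pos_le_add' fun ε hε => ?_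
  obtain ⟨f, hf, hfs⟩ := exists_reparam_lt
    (lt_add_of_pos_right (frechetDist a b) (half_pos hε))
  obtain ⟨g, hg, hgs⟩ := exists_reparam_lt
    (lt_add_of_pos_right (frechetDist b c) (half_pos hε))
  have hcomp := reparam_comp hf hg
  have key : fSup a c (f ∘ g) ≤ fSup a b f + fSup b c g := by
    refine Real.iSup_le (fun t => ?_) (add_nonneg (fSup_nonneg a b f) (fSup_nonneg b c g))
    have hgt : g (t:ℝ) ∈ Set.Icc (0:ℝ) 1 := hg.2.2.2.1 t.2
    calc dist (a ((f ∘ g) (t:ℝ))) (c (t:ℝ))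
        ≤ dist (a (f (g (t:ℝ)))) (b (g (t:ℝ))) + dist (b (g (t:ℝ))) (c (t:ℝ)) :=
          dist_triangle _ _ _
    _ ≤ fSup a b f + fSup b c g :=
          add_le_add (le_fSup hf hab ⟨g (t:ℝ), hgt⟩) (le_fSup hg hbc t)
  calc frechetDist a c ≤ fSup a c (f ∘ g) := frechetDist_le a c hcomp
  _ ≤ fSup a b f + fSup b c g := key
  _ ≤ (frechetDist a b + ε/2) + (frechetDist b c + ε/2) := add_le_add hfs.le hgs.le
  _ = frechetDist a b + frechetDist b c + ε := by ring


lemma exists_pl (p : ℝ) (hp0 : 0 < p) (t s : ℕ → ℝ) (ht : StrictMono t)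
    (ht0 : 0 < t 0) (htp : ∀ n, t n < p) (htlim : Tendsto t atTop (nhds p))
    (hs : StrictMono s) (hs0 : 0 < s 0) (hsp : ∀ n, s n < p)
    (hslim : Tendsto s atTop (nhds p)) :
    ∃ f : ℝ → ℝ, StrictMono f ∧ Continuous f ∧ (∀ x, p ≤ x → f x = x) ∧
      (∀ x, x ≤ 0 → f x = x) ∧ (∀ n, f (t n) = s n) := by
  classical
  -- extended node sequences starting at 0
  set tt : ℕ → ℝ := fun n => Nat.casesOn n 0 t with htt_def
  set ss : ℕ → ℝ := fun n => Nat.casesOn n 0 s with hss_def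
  have htt0 : tt 0 = 0 := rfl
  have hss0 : ss 0 = 0 := rfl
  have htts : ∀ n, tt (n+1) = t n := fun n => rfl
  have hsss : ∀ n, ss (n+1) = s n := fun n => rfl
  have httm : StrictMono tt := by
    have h : ∀ n, tt n < tt (n+1) := by
      intro n
      cases n with
      | zero => exact ht0
      | succ m => exact ht (Nat.lt_succ_self m)
    exact strictMono_nat_of_lt_succ h
  have hssm : StrictMono ss := by
    have h : ∀ n, ss n < ss (n+1) := by
      intro n
      cases n with
      | zero => exact hs0
      | succ m => exact hs (Nat.lt_succ_self m)
    exact strictMono_nat_of_lt_succ h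
  have http : ∀ n, tt n < p := by
    intro n; cases n with
    | zero => exact hp0
    | succ m => exact htp m
  have hssp : ∀ n, ss n < p := by
    intro n; cases n with
    | zero => exact hp0
    | succ m => exact hsp m
  have httnn : ∀ n, 0 ≤ tt n := by
    intro n; cases n with
    | zero => exact le_refl 0
    | succ m => exact (le_trans ht0.le (ht.monotone (Nat.zero_le m)))
  have hssnn : ∀ n, 0 ≤ ss n := by
    intro n; cases n with
    | zero => exact le_refl 0
    | succ m => exact (le_trans hs0.le (hs.monotone (Nat.zero_le m)))
  have httlim : Tendsto tt atTop (nhds p) := by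
    rw [show tt = fun n => tt n from rfl]
    have : Tendsto (fun n => tt (n+1)) atTop (nhds p) := by
      simpa [htts] using htlim
    exact (tendsto_add_atTop_iff_nat 1).mp this
  have hsslim : Tendsto ss atTop (nhds p) := by
    have : Tendsto (fun n => ss (n+1)) atTop (nhds p) := by
      simpa [hsss] using hslim
    exact (tendsto_add_atTop_iff_nat 1).mp this
  -- index existence
  have hex_t : ∀ x, x < p → ∃ n, x < tt n := by
    intro x hx
    have := httlim.eventually (eventually_gt_nhds hx)
    exact this.exists
  have hex_s : ∀ y, y < p → ∃ n, y < ss n := by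
    intro y hy
    have := hsslim.eventually (eventually_gt_nhds hy)
    exact this.exists
  have hbracket_t : ∀ x, 0 ≤ x → x < p → ∃ j, tt j ≤ x ∧ x < tt (j+1) := by
    intro x hx0 hxp
    have hne : {n | x < tt n}.Nonempty := hex_t x hxp
    have hmem : x < tt (sInf {n | x < tt n}) := Nat.sInf_mem hne
    have hKpos : sInf {n | x < tt n} ≠ 0 := by
      intro h
      rw [h, htt0] at hmem
      exact absurd hmem (not_lt.mpr hx0)
    obtain ⟨j, hj⟩ := Nat.exists_eq_succ_of_ne_zero hKpos
    rw [hj] at hmem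
    refine ⟨j, ?_, hmem⟩
    have hnot : j ∉ {n | x < tt n} := Nat.notMem_of_lt_sInf (by omega)
    simpa using hnot
  have hbracket_s : ∀ y, 0 ≤ y → y < p → ∃ j, ss j ≤ y ∧ y < ss (j+1) := by
    intro y hy0 hyp
    have hne : {n | y < ss n}.Nonempty := hex_s y hyp
    have hmem : y < ss (sInf {n | y < ss n}) := Nat.sInf_mem hne
    have hKpos : sInf {n | y < ss n} ≠ 0 := by
      intro h
      rw [h, hss0] at hmem
      exact absurd hmem (not_lt.mpr hy0)
    obtain ⟨j, hj⟩ := Nat.exists_eq_succ_of_ne_zero hKpos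
    rw [hj] at hmem
    refine ⟨j, ?_, hmem⟩
    have hnot : j ∉ {n | y < ss n} := Nat.notMem_of_lt_sInf (by omega)
    simpa using hnot
  have hsInf_eq : ∀ x j, tt j ≤ x → x < tt (j+1) → sInf {n | x < tt n} = j + 1 := by
    intro x j h1 h2
    refine le_antisymm (Nat.sInf_le h2) ?_
    by_contra h
    push_neg at h
    have hmem : x < tt (sInf {n | x < tt n}) := Nat.sInf_mem (s := {n | x < tt n}) ⟨j+1, h2⟩
    have : tt (sInf {n | x < tt n}) ≤ tt j := httm.monotone (by omega)
    linarith
  -- the function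
  set v : ℕ → ℝ → ℝ := fun j x =>
    ss j + (x - tt j) * (ss (j+1) - ss j) / (tt (j+1) - tt j) with hv
  set f : ℝ → ℝ := fun x =>
    if x < 0 then x else if p ≤ x then x else v (sInf {n | x < tt n} - 1) x with hf
  have hfval : ∀ x j, tt j ≤ x → x < tt (j+1) → f x = v j x := by
    intro x j h1 h2
    have hx0 : 0 ≤ x := le_trans (httnn j) h1
    have hxp : x < p := lt_of_lt_of_le h2 (http (j+1)).le
    have : sInf {n | x < tt n} = j + 1 := hsInf_eq x j h1 h2
    simp only [hf, not_lt.mpr hx0, if_neg (not_lt.mpr hx0), if_neg (not_le.mpr hxp), this, Nat.add_sub_cancel]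
  have hvbound : ∀ x j, tt j ≤ x → x < tt (j+1) → ss j ≤ v j x ∧ v j x < ss (j+1) := by
    intro x j h1 h2
    have hΔt : 0 < tt (j+1) - tt j := by
      have := httm (Nat.lt_succ_self j); linarith
    have hΔs : 0 < ss (j+1) - ss j := by
      have := hssm (Nat.lt_succ_self j); linarith
    constructor
    · have : 0 ≤ (x - tt j) * (ss (j+1) - ss j) / (tt (j+1) - tt j) :=
        div_nonneg (mul_nonneg (by linarith) hΔs.le) hΔt.le
      simp only [hv]; linarith
    · have hlt : (x - tt j) * (ss (j+1) - ss j) / (tt (j+1) - tt j)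
          < ss (j+1) - ss j := by
        rw [div_lt_iff₀ hΔt]
        have : x - tt j < tt (j+1) - tt j := by linarith
        calc (x - tt j) * (ss (j+1) - ss j) < (tt (j+1) - tt j) * (ss (j+1) - ss j) :=
          mul_lt_mul_of_pos_right this hΔs
        _ = (ss (j+1) - ss j) * (tt (j+1) - tt j) := by ring
      simp only [hv]; linarith
  -- values on pieces
  have hfneg : ∀ x : ℝ, x < 0 → f x = x := fun x hx => by simp only [hf, if_pos hx]
  have hfp : ∀ x, p ≤ x → f x = x := by
    intro x hx
    have : ¬ x < 0 := not_lt.mpr (le_trans hp0.le hx)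
    simp only [hf, if_neg this, if_pos hx]
  have hf0p : ∀ x, 0 ≤ x → x < p → ∃ j, tt j ≤ x ∧ x < tt (j+1) ∧ f x = v j x := by
    intro x h0 hp
    obtain ⟨j, h1, h2⟩ := hbracket_t x h0 hp
    exact ⟨j, h1, h2, hfval x j h1 h2⟩
  -- strict monotonicity
  have hmono : StrictMono f := by
    intro x y hxy
    rcases lt_or_ge x 0 with hx0 | hx0
    · rw [hfneg x hx0]
      rcases lt_or_ge y 0 with hy0 | hy0
      · rw [hfneg y hy0]; exact hxy
      · rcases le_or_gt p y with hyp | hyp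
        · rw [hfp y hyp]; linarith
        · obtain ⟨j, h1, h2, h3⟩ := hf0p y hy0 hyp
          rw [h3]
          have := (hvbound y j h1 h2).1
          have := hssnn j
          linarith
    · rcases le_or_gt p x with hxp | hxp
      · rw [hfp x hxp, hfp y (le_trans hxp hxy.le)]; exact hxy
      · obtain ⟨j, h1, h2, h3⟩ := hf0p x hx0 hxp
        rw [h3]
        rcases le_or_gt p y with hyp | hyp
        · rw [hfp y hyp]
          have := (hvbound x j h1 h2).2
          have := hssp (j+1)
          linarith
        · have hy0 : 0 ≤ y := le_trans hx0 hxy.le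
          obtain ⟨l, g1, g2, g3⟩ := hf0p y hy0 hyp
          rw [g3]
          have hjl : j ≤ l := by
            by_contra hc
            push_neg at hc
            have : tt (l+1) ≤ tt j := httm.monotone (show l+1 ≤ j by omega)
            linarith
          rcases eq_or_lt_of_le hjl with rfl | hjl
          · -- same piece: linear strict
            have hΔt : 0 < tt (j+1) - tt j := by
              have := httm (Nat.lt_succ_self j); linarith
            have hΔs : 0 < ss (j+1) - ss j := by
              have := hssm (Nat.lt_succ_self j); linarith
            simp only [hv]
            have : (x - tt j) * (ss (j+1) - ss j) / (tt (j+1) - tt j)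
                < (y - tt j) * (ss (j+1) - ss j) / (tt (j+1) - tt j) := by
              rw [div_lt_div_iff_of_pos_right hΔt]
              exact mul_lt_mul_of_pos_right (by linarith) hΔs
            linarith
          · have h4 := (hvbound x j h1 h2).2
            have h5 := (hvbound y l g1 g2).1
            have : ss (j+1) ≤ ss l := hssm.monotone (show j+1 ≤ l by omega)
            linarith
  -- surjectivity
  have hsurj : Function.Surjective f := by
    intro y
    rcases lt_or_ge y 0 with hy0 | hy0
    · exact ⟨y, hfneg y hy0⟩
    · rcases le_or_gt p y with hyp | hyp
      · exact ⟨y, hfp y hyp⟩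
      · obtain ⟨j, h1, h2⟩ := hbracket_s y hy0 hyp
        have hΔt : 0 < tt (j+1) - tt j := by
          have := httm (Nat.lt_succ_self j); linarith
        have hΔs : 0 < ss (j+1) - ss j := by
          have := hssm (Nat.lt_succ_self j); linarith
        set x := tt j + (y - ss j) * (tt (j+1) - tt j) / (ss (j+1) - ss j) with hx
        have hx1 : tt j ≤ x := by
          have : 0 ≤ (y - ss j) * (tt (j+1) - tt j) / (ss (j+1) - ss j) :=
            div_nonneg (mul_nonneg (by linarith) hΔt.le) hΔs.le
          simp only [hx]; linarith
        have hx2 : x < tt (j+1) := by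
          have : (y - ss j) * (tt (j+1) - tt j) / (ss (j+1) - ss j)
              < tt (j+1) - tt j := by
            rw [div_lt_iff₀ hΔs]
            calc (y - ss j) * (tt (j+1) - tt j) < (ss (j+1) - ss j) * (tt (j+1) - tt j) :=
              mul_lt_mul_of_pos_right (by linarith) hΔt
            _ = (tt (j+1) - tt j) * (ss (j+1) - ss j) := by ring
          simp only [hx]; linarith
        refine ⟨x, ?_⟩
        rw [hfval x j hx1 hx2]
        simp only [hv, hx]
        field_simp
        ring
  have hcont : Continuous f :=
    ((StrictMono.orderIsoOfSurjective f hmono hsurj).continuous :)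
  have hnodes : ∀ n, f (t n) = s n := by
    intro n
    have h1 : tt (n+1) ≤ t n := le_of_eq (htts n)
    have h2 : t n < tt (n+1+1) := by
      rw [htts]
      exact ht (Nat.lt_succ_self n)
    rw [hfval (t n) (n+1) h1 h2]
    simp only [hv, htts, hsss]
    simp
  exact ⟨f, hmono, hcont, hfp, fun x hx => by
    rcases lt_or_eq_of_le hx with h | h
    · exact hfneg x h
    · subst h
      obtain ⟨j, h1, h2, h3⟩ := hf0p 0 (le_refl 0) hp0
      have hj0 : tt j ≤ 0 := h1
      have : tt j = 0 := le_antisymm hj0 (httnn j)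
      have hjz : j = 0 := by
        by_contra hc
        have : tt 0 < tt j := httm (Nat.pos_of_ne_zero hc)
        rw [htt0] at this
        linarith
      rw [h3, hjz]
      simp [hv, htt0, hss0], hnodes⟩


lemma sseq_strictMono {p : ℝ} (hp0 : 0 < p) :
    StrictMono (fun n : ℕ => p * (n+1) / (n+2)) := by
  intro a b hab
  have h1 : (0:ℝ) < a + 2 := by positivity
  have h2 : (0:ℝ) < b + 2 := by positivity
  rw [div_lt_div_iff₀ h1 h2]
  have hab' : (a:ℝ) < b := by exact_mod_cast hab
  nlinarith

lemma sseq_lt {p : ℝ} (hp0 : 0 < p) (n : ℕ) : p * (n+1) / (n+2) < p := by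
  rw [div_lt_iff₀ (by positivity)]
  nlinarith

lemma sseq_pos {p : ℝ} (hp0 : 0 < p) (n : ℕ) : 0 < p * (n+1) / (n+2) := by positivity

lemma sseq_tendsto {p : ℝ} : Tendsto (fun n : ℕ => p * (n+1) / (n+2)) atTop (nhds p) := by
  have h : ∀ n : ℕ, p * (n+1) / (n+2) = p - p / (n+2) := by
    intro n
    field_simp
    ring
  simp only [h]
  have h2 : Tendsto (fun n : ℕ => p / (n+2)) atTop (nhds 0) := by
    have h3 := (tendsto_const_div_atTop_nhds_zero_nat p).comp (tendsto_add_atTop_nat 2)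
    have h4 : (fun n : ℕ => p / ((n:ℝ)+2)) = (fun n : ℕ => p / (n:ℝ)) ∘ (fun a => a + 2) := by
      funext n
      simp only [Function.comp_apply]
      push_cast
      ring_nf
    rw [h4]
    exact h3
  simpa using tendsto_const_nhds.sub h2

lemma left_case {u σ : ℝ → EuclideanSpace ℝ (Fin d)} {p : ℝ} (hp1 : p ≤ 1)
    (hL : ∀ a, a < p → ∀ M, ∃ x, x ∈ Set.Icc (0:ℝ) 1 ∧ a < x ∧ x < p ∧ M < ‖u x‖) :
    ∃ f : ℝ → ℝ, Reparam f ∧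
      ¬ BddAbove (Set.range fun t : Set.Icc (0:ℝ) 1 => dist (σ (f (t:ℝ))) (u (t:ℝ))) := by
  classical
  have hp0 : 0 < p := by
    obtain ⟨x, hx1, _, hx3, _⟩ := hL (p - 1) (by linarith) 0
    exact lt_of_le_of_lt hx1.1 hx3
  set s : ℕ → ℝ := fun n => p * (n+1) / (n+2) with hs_def
  -- recursive construction of t
  have hstep : ∀ (n : ℕ) (x : ℝ), x < p → ∃ y, x < y ∧ p - 1/(n+1) < y ∧ p/2 < y ∧ y < p ∧
      y ∈ Set.Icc (0:ℝ) 1 ∧ (n:ℝ) + ‖σ (s n)‖ < ‖u y‖ := by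
    intro n x hx
    have ha : max x (max (p - 1/(n+1)) (p/2)) < p := by
      apply max_lt hx
      apply max_lt _ (by linarith)
      have : (0:ℝ) < 1/(n+1) := by positivity
      linarith
    obtain ⟨y, hy1, hy2, hy3, hy4⟩ := hL _ ha ((n:ℝ) + ‖σ (s n)‖)
    refine ⟨y, lt_of_le_of_lt (le_max_left _ _) hy2,
      lt_of_le_of_lt (le_trans (le_max_left _ _) (le_max_right _ _)) hy2,
      lt_of_le_of_lt (le_trans (le_max_right _ _) (le_max_right _ _)) hy2, hy3, hy1, hy4⟩
  choose step hst1 hst2 hst3 hst4 hst5 hst6 using hstep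
  set tseq : ℕ → {x : ℝ // x < p} := fun n =>
    Nat.rec (motive := fun _ => {x : ℝ // x < p})
      ⟨step 0 (p-1) (by linarith), hst4 0 (p-1) (by linarith)⟩
      (fun m ih => ⟨step (m+1) ih.1 ih.2, hst4 (m+1) ih.1 ih.2⟩) n with htseq
  set t : ℕ → ℝ := fun n => (tseq n).1 with ht_def
  have htsucc : ∀ n, t (n+1) = step (n+1) (t n) (tseq n).2 := fun n => rfl
  have ht_lt : ∀ n, t n < p := fun n => (tseq n).2
  have ht_mono : StrictMono t := by
    apply strictMono_nat_of_lt_succ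
    intro n
    rw [htsucc n]
    exact hst1 (n+1) (t n) (tseq n).2
  have ht_icc : ∀ n, t n ∈ Set.Icc (0:ℝ) 1 := by
    intro n
    cases n with
    | zero => exact hst5 0 (p-1) (by linarith)
    | succ m => rw [htsucc m]; exact hst5 (m+1) (t m) (tseq m).2
  have ht_norm : ∀ n : ℕ, (n:ℝ) + ‖σ (s n)‖ < ‖u (t n)‖ := by
    intro n
    cases n with
    | zero => exact hst6 0 (p-1) (by linarith)
    | succ m => rw [htsucc m]; exact hst6 (m+1) (t m) (tseq m).2
  have ht_low : ∀ n, p - 1/(n+1) < t n := by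
    intro n
    cases n with
    | zero => exact hst2 0 (p-1) (by linarith)
    | succ m => rw [htsucc m]; exact hst2 (m+1) (t m) (tseq m).2
  have ht_half : ∀ n, p/2 < t n := by
    intro n
    cases n with
    | zero => exact hst3 0 (p-1) (by linarith)
    | succ m => rw [htsucc m]; exact hst3 (m+1) (t m) (tseq m).2
  have ht0 : 0 < t 0 := lt_trans (by linarith) (ht_half 0)
  have ht_lim : Tendsto t atTop (nhds p) := by
    have hlow : Tendsto (fun n : ℕ => p - 1/((n:ℝ)+1)) atTop (nhds p) := by
      have h2 : Tendsto (fun n : ℕ => (1:ℝ) / (n+1)) atTop (nhds 0) := by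
        have h3 := (tendsto_const_div_atTop_nhds_zero_nat (1:ℝ)).comp (tendsto_add_atTop_nat 1)
        have h4 : (fun n : ℕ => (1:ℝ) / ((n:ℝ)+1)) = (fun n : ℕ => (1:ℝ) / (n:ℝ)) ∘ (fun a => a + 1) := by
          funext n
          simp only [Function.comp_apply]
          push_cast
          ring_nf
        rw [h4]
        exact h3
      simpa using tendsto_const_nhds.sub h2
    refine tendsto_of_tendsto_of_tendsto_of_le_of_le hlow tendsto_const_nhds
      (fun n => (ht_low n).le) (fun n => (ht_lt n).le)
  obtain ⟨f, hf_mono, hf_cont, hf_ge, hf_le, hf_nodes⟩ :=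
    exists_pl p hp0 t s ht_mono ht0 ht_lt ht_lim (sseq_strictMono hp0)
      (sseq_pos hp0 0) (sseq_lt hp0) sseq_tendsto
  have hf0 : f 0 = 0 := hf_le 0 (le_refl 0)
  have hf1 : f 1 = 1 := hf_ge 1 hp1
  have hrep : Reparam f := by
    refine ⟨hf_cont.continuousOn, (hf_mono.monotone).monotoneOn _,
      (hf_mono.injective).injOn, ?_, hf0, hf1⟩
    intro x hx
    constructor
    · rw [← hf0]; exact hf_mono.monotone hx.1
    · rw [← hf1]; exact hf_mono.monotone hx.2
  refine ⟨f, hrep, ?_⟩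
  rintro ⟨b, hb⟩
  obtain ⟨n, hn⟩ := exists_nat_gt b
  have hmem : dist (σ (f (t n))) (u (t n)) ≤ b :=
    hb ⟨⟨t n, ht_icc n⟩, rfl⟩
  rw [hf_nodes n] at hmem
  have : ‖u (t n)‖ - ‖σ (s n)‖ ≤ dist (σ (s n)) (u (t n)) := by
    calc ‖u (t n)‖ - ‖σ (s n)‖ ≤ ‖u (t n) - σ (s n)‖ := norm_sub_norm_le _ _
    _ = dist (u (t n)) (σ (s n)) := (dist_eq_norm _ _).symm
    _ = dist (σ (s n)) (u (t n)) := dist_comm _ _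
  have hn' := ht_norm n
  have : (n:ℝ) < b := by linarith
  linarith



lemma unbounded_family_exists {u σ : ℝ → EuclideanSpace ℝ (Fin d)} (hu : ¬ BddCurve u) :
    ∃ f : ℝ → ℝ, Reparam f ∧
      ¬ BddAbove (Set.range fun t : Set.Icc (0:ℝ) 1 => dist (σ (f (t:ℝ))) (u (t:ℝ))) := by
  classical
  have hu' : ∀ M, ∃ x, x ∈ Set.Icc (0:ℝ) 1 ∧ M < ‖u x‖ := by
    unfold BddCurve at hu
    push_neg at hu
    intro M
    obtain ⟨x, h1, h2⟩ := hu M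
    exact ⟨x, h1, h2⟩
  set B : Set ℝ := {x | x ∈ Set.Icc (0:ℝ) 1 ∧
    ∀ M, ∃ t', t' ∈ Set.Icc (0:ℝ) 1 ∧ t' ≤ x ∧ M < ‖u t'‖} with hB
  have h1B : (1:ℝ) ∈ B := by
    refine ⟨⟨zero_le_one, le_refl 1⟩, fun M => ?_⟩
    obtain ⟨x, h1, h2⟩ := hu' M
    exact ⟨x, h1, h1.2, h2⟩
  have hBbdd : BddBelow B := ⟨0, fun x hx => hx.1.1⟩
  set p := sInf B with hp
  have hp0 : 0 ≤ p := le_csInf ⟨1, h1B⟩ fun x hx => hx.1.1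
  have hp1 : p ≤ 1 := csInf_le hBbdd h1B
  have C1 : ∀ y, p < y → ∀ M, ∃ t', t' ∈ Set.Icc (0:ℝ) 1 ∧ t' ≤ y ∧ M < ‖u t'‖ := by
    intro y hy M
    obtain ⟨x, hxB, hxy⟩ := exists_lt_of_csInf_lt ⟨1, h1B⟩ hy
    obtain ⟨t', h1, h2, h3⟩ := hxB.2 M
    exact ⟨t', h1, le_trans h2 hxy.le, h3⟩
  have C2 : ∀ y, y < p → ∃ M, ∀ t', t' ∈ Set.Icc (0:ℝ) 1 → t' ≤ y → ‖u t'‖ ≤ M := by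
    intro y hy
    by_cases hy0 : 0 ≤ y
    · by_contra hc
      push_neg at hc
      have hyB : y ∈ B := by
        refine ⟨⟨hy0, le_trans hy.le hp1⟩, fun M => ?_⟩
        obtain ⟨t', h1, h2, h3⟩ := hc M
        exact ⟨t', h1, h2, h3⟩
      exact absurd (csInf_le hBbdd hyB) (not_le.mpr hy)
    · push_neg at hy0
      exact ⟨0, fun t' ht' hle => absurd (le_trans ht'.1 hle) (not_le.mpr hy0)⟩
  by_cases hR : ∀ b, p < b → ∀ M, ∃ x, x ∈ Set.Icc (0:ℝ) 1 ∧ p < x ∧ x < b ∧ M < ‖u x‖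
  · -- right accumulation: reflect
    have hp1' : p < 1 := by
      obtain ⟨x, h1, h2, _, _⟩ := hR (p+1) (by linarith) 0
      exact lt_of_lt_of_le h2 h1.2
    have hL' : ∀ a, a < 1 - p → ∀ M, ∃ x, x ∈ Set.Icc (0:ℝ) 1 ∧ a < x ∧ x < 1 - p ∧
        M < ‖(fun z => u (1 - z)) x‖ := by
      intro a ha M
      obtain ⟨y, hy1, hy2, hy3, hy4⟩ := hR (1 - a) (by linarith) M
      refine ⟨1 - y, ⟨by linarith [hy1.2], by linarith [hy1.1]⟩, by linarith, by linarith, ?_⟩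
      simpa using hy4
    obtain ⟨f', hrep', hnb'⟩ := left_case (u := fun z => u (1 - z)) (σ := fun z => σ (1 - z))
      (by linarith : 1 - p ≤ 1) hL'
    obtain ⟨fc', fm', fi', fmaps', f0', f1'⟩ := hrep'
    have hmapsr : Set.MapsTo (fun x : ℝ => 1 - x) (Set.Icc 0 1) (Set.Icc 0 1) := by
      intro x hx
      exact ⟨by simp; linarith [hx.2], by simp; linarith [hx.1]⟩
    set f : ℝ → ℝ := fun x => 1 - f' (1 - x) with hf
    have hrep : Reparam f := by
      refine ⟨?_, ?_, ?_, ?_, ?_, ?_⟩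
      · exact continuousOn_const.sub (fc'.comp ((continuous_const.sub continuous_id).continuousOn) hmapsr)
      · intro x hx y hy hxy
        have := fm' (hmapsr hy) (hmapsr hx) (by simp; linarith)
        simp only [hf]
        linarith
      · intro x hx y hy hxy
        simp only [hf] at hxy
        have h2 : f' (1 - x) = f' (1 - y) := by linarith
        have h3 : 1 - x = 1 - y := fi' (hmapsr hx) (hmapsr hy) h2
        linarith
      · intro x hx
        have := fmaps' (hmapsr hx)
        exact ⟨by simp only [hf]; linarith [this.2], by simp only [hf]; linarith [this.1]⟩
      · simp only [hf]
        norm_num [f1']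
      · simp only [hf]
        norm_num [f0']
    refine ⟨f, hrep, ?_⟩
    rintro ⟨bb, hbb⟩
    apply hnb'
    refine ⟨bb, ?_⟩
    rintro r ⟨t', rfl⟩
    have h1t : (1:ℝ) - (t':ℝ) ∈ Set.Icc (0:ℝ) 1 := hmapsr t'.2
    have heq : f (1 - (t':ℝ)) = 1 - f' (t':ℝ) := by
      simp only [hf]
      norm_num
    show dist (σ (1 - f' (t':ℝ))) (u (1 - (t':ℝ))) ≤ bb
    rw [← heq]
    exact hbb ⟨⟨1 - (t':ℝ), h1t⟩, rfl⟩
  · -- left accumulation at p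
    push_neg at hR
    obtain ⟨b, hbp, M₀, hM₀⟩ := hR
    have hL : ∀ a, a < p → ∀ M, ∃ x, x ∈ Set.Icc (0:ℝ) 1 ∧ a < x ∧ x < p ∧ M < ‖u x‖ := by
      intro a ha M
      set δ := min ((p - a)/2) ((b - p)/2) with hδ
      have hδ0 : 0 < δ := lt_min (by linarith) (by linarith)
      have hδ1 : δ ≤ (p - a)/2 := min_le_left _ _
      have hδ2 : δ ≤ (b - p)/2 := min_le_right _ _
      obtain ⟨M₂, hM₂⟩ := C2 (p - δ) (by linarith)
      have hpmem : p ∈ Set.Icc (0:ℝ) 1 := ⟨hp0, hp1⟩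
      obtain ⟨x, hx1, hx2, hx3⟩ := C1 (p + δ) (by linarith) (max (max M M₀) (max M₂ ‖u p‖))
      have hxM : M < ‖u x‖ := lt_of_le_of_lt (le_trans (le_max_left _ _) (le_max_left _ _)) hx3
      have hxM₀ : M₀ < ‖u x‖ := lt_of_le_of_lt (le_trans (le_max_right _ _) (le_max_left _ _)) hx3
      have hxM₂ : M₂ < ‖u x‖ := lt_of_le_of_lt (le_trans (le_max_left _ _) (le_max_right _ _)) hx3
      have hxup : ‖u p‖ < ‖u x‖ := lt_of_le_of_lt (le_trans (le_max_right _ _) (le_max_right _ _)) hx3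
      have hxnep : x ≠ p := by
        intro h
        rw [h] at hxup
        exact lt_irrefl _ hxup
      have hxlt : x < p := by
        rcases lt_or_ge x p with h | h
        · exact h
        · exfalso
          have hpx : p < x := lt_of_le_of_ne h (Ne.symm hxnep)
          have hxb : x < b := by linarith [hx2]
          exact absurd (hM₀ x hx1 hpx hxb) (not_le.mpr hxM₀)
      have hxa : a < x := by
        by_contra h
        push_neg at h
        have : x ≤ p - δ := by linarith
        exact absurd (hM₂ x hx1 this) (not_le.mpr hxM₂)
      exact ⟨x, hx1, hxa, hxlt, hxM⟩
    exact left_case hp1 hL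

lemma frechet_zero_of_unbounded {u : ℝ → EuclideanSpace ℝ (Fin d)} (hu : ¬ BddCurve u)
    (σ : ℝ → EuclideanSpace ℝ (Fin d)) : frechetDist σ u = 0 := by
  obtain ⟨f, hrep, hnb⟩ := unbounded_family_exists (σ := σ) hu
  have h0 : fSup σ u f = 0 := Real.iSup_of_not_bddAbove hnb
  refine le_antisymm ?_ (frechetDist_nonneg σ u)
  rw [← h0]
  exact frechetDist_le σ u hrep

end FrechetAux

open FrechetAux

lemma final_arith (Dv mj Φ γ E nv cUv Xτ Xc Sd sumU : ℝ)
    (hγ0 : 0 < γ) (hγ1 : γ < 1) (hΦ : 0 < Φ) (hEΦ : Φ ≤ E)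
    (hn : 0 < nv) (hcU : 0 < cUv) (hD0 : 0 ≤ Dv) (hSd0 : 0 ≤ Sd)
    (hmj : mj = Sd / cUv)
    (key1 : Xτ ≤ Dv + Xc)
    (key3 : cUv * Xc ≤ Sd + sumU)
    (key4 : sumU ≤ nv * E) :
    Xτ / E ≤ (2 * mj + Dv) / ((1 - γ) * Φ) + 2 / (γ * (cUv / nv)) := by
  have hE : 0 < E := lt_of_lt_of_le hΦ hEΦ
  have hE0 : E ≠ 0 := ne_of_gt hE
  have hcU0 : cUv ≠ 0 := ne_of_gt hcU
  have hn0 : nv ≠ 0 := ne_of_gt hn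
  have hγ0' : γ ≠ 0 := ne_of_gt hγ0
  have hmj0 : 0 ≤ mj := by
    rw [hmj]
    exact div_nonneg hSd0 hcU.le
  have hXc : Xc ≤ Sd / cUv + nv * E / cUv := by
    rw [← add_div, le_div_iff₀ hcU]
    nlinarith
  have key6 : Xτ ≤ Dv + mj + nv * E / cUv := by
    rw [hmj]
    linarith
  have hA : Xτ / E ≤ (Dv + mj) / E + nv / cUv := by
    have h1 : Xτ / E ≤ (Dv + mj + nv * E / cUv) / E := by gcongr
    have h2 : (Dv + mj + nv * E / cUv) / E = (Dv + mj) / E + nv / cUv := by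
      rw [add_div]
      congr 1
      rw [div_div, mul_comm cUv E, mul_comm nv E, mul_div_mul_left nv cUv hE0]
    linarith
  have hB : (Dv + mj) / E ≤ (Dv + mj) / Φ := by
    rw [div_le_div_iff₀ hE hΦ]
    nlinarith
  have hC : (Dv + mj) / Φ ≤ (2 * mj + Dv) / ((1 - γ) * Φ) := by
    have hpos : 0 < (1 - γ) * Φ := by nlinarith
    rw [div_le_div_iff₀ hΦ hpos]
    nlinarith [mul_nonneg hmj0 hΦ.le, mul_nonneg hD0 hΦ.le,
      mul_nonneg (mul_nonneg hmj0 hγ0.le) hΦ.le, mul_nonneg (mul_nonneg hD0 hγ0.le) hΦ.le]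
  have hDfin : nv / cUv ≤ 2 / (γ * (cUv / nv)) := by
    have hpos : 0 < γ * (cUv / nv) := by positivity
    rw [div_le_div_iff₀ (by positivity) hpos]
    have heq : nv * (γ * (cUv / nv)) = γ * cUv := by
      field_simp
    rw [heq]
    nlinarith
  linarith [le_trans hB hC]


/-- with `C_1, …, C_w` enumerating all `k`-element subsets of `T`,
`X_i(τ) = min_{c∈C_i} d_F(τ, c)`, `φ` the uniform distribution on `T`, clusters `U_j`
around the centers `ĉ_j` of a center-set `Ĉ ⊆ T`, cluster means `m_j`, and a lower bound
`0 < Φ ≤ E_φ[X_i]` for all `i`, the sensitivity `ξ(τ) = max_i X_i(τ)/E_φ[X_i]` of each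
`τ ∈ U_j` satisfies `ξ(τ) ≤ (2m_j + d_F(τ, ĉ_j))/((1−γ)Φ) + 2/(γ·φ(U_j))` for every
`γ ∈ (0,1)`. -/
theorem sensitivity_upper_bound (d k w : ℕ) (hk : 0 < k)
    (T : Finset (ℝ → EuclideanSpace ℝ (Fin d))) (hT : T.Nonempty)
    (n : ℕ) (hn : n = T.card) (hkn : k ≤ n)
    (C : Fin w → Finset (ℝ → EuclideanSpace ℝ (Fin d)))
    (hCsub : ∀ i, C i ⊆ T) (hCcard : ∀ i, (C i).card = k)
    (hCinj : Function.Injective C)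
    (hCall : ∀ S : Finset (ℝ → EuclideanSpace ℝ (Fin d)),
      S ⊆ T → S.card = k → ∃ i, C i = S)
    (X : Fin w → (ℝ → EuclideanSpace ℝ (Fin d)) → ℝ)
    (hX : ∀ i τ, X i τ = sInf { r : ℝ | ∃ c ∈ C i, r = frechetDist τ c })
    (chat : Fin k → (ℝ → EuclideanSpace ℝ (Fin d))) (hchat : ∀ j, chat j ∈ T)
    (U : Fin k → Finset (ℝ → EuclideanSpace ℝ (Fin d)))
    (hUne : ∀ j, (U j).Nonempty)
    (hUsub : ∀ j, U j ⊆ T)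
    (hUdisj : ∀ j j', j ≠ j' → Disjoint (U j) (U j'))
    (hUcover : ∀ τ ∈ T, ∃ j, τ ∈ U j)
    (hUnear : ∀ j, ∀ τ ∈ U j, ∀ j', frechetDist τ (chat j) ≤ frechetDist τ (chat j'))
    (m : Fin k → ℝ)
    (hm : ∀ j, m j = (((U j).card : ℝ) / (n : ℝ))⁻¹ *
      ∑ τ ∈ U j, frechetDist τ (chat j) * (1 / (n : ℝ)))
    (Φ : ℝ) (hΦpos : 0 < Φ)
    (hΦle : ∀ i, Φ ≤ ∑ τ ∈ T, X i τ * (1 / (n : ℝ))) :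
    ∀ γ ∈ Set.Ioo (0 : ℝ) 1, ∀ j : Fin k, ∀ τ ∈ U j, ∀ i : Fin w,
      X i τ / (∑ τ' ∈ T, X i τ' * (1 / (n : ℝ))) ≤
        (2 * m j + frechetDist τ (chat j)) / ((1 - γ) * Φ) +
          2 / (γ * (((U j).card : ℝ) / (n : ℝ))) := by
  classical
  -- basic facts about X
  have hCne : ∀ i, (C i).Nonempty := fun i => Finset.card_pos.mp (by rw [hCcard i]; exact hk)
  have hXle : ∀ (i : Fin w) τ' c, c ∈ C i → X i τ' ≤ frechetDist τ' c := by
    intro i τ' c hc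
    rw [hX]
    refine csInf_le ⟨0, ?_⟩ ⟨c, hc, rfl⟩
    rintro r ⟨c', _, rfl⟩
    exact frechetDist_nonneg τ' c'
  have hXmem : ∀ (i : Fin w) τ', ∃ c ∈ C i, X i τ' = frechetDist τ' c := by
    intro i τ'
    rw [hX]
    have heq : { r : ℝ | ∃ c ∈ C i, r = frechetDist τ' c }
        = (fun c => frechetDist τ' c) '' ↑(C i) := by
      ext r
      simp [eq_comm]
    have hfin : { r : ℝ | ∃ c ∈ C i, r = frechetDist τ' c }.Finite := by
      rw [heq]
      exact (C i).finite_toSet.image _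
    obtain ⟨c₀, hc₀⟩ := hCne i
    have hne : { r : ℝ | ∃ c ∈ C i, r = frechetDist τ' c }.Nonempty :=
      ⟨frechetDist τ' c₀, c₀, hc₀, rfl⟩
    have := hne.csInf_mem hfin
    obtain ⟨c, hc, hceq⟩ := this
    exact ⟨c, hc, hceq⟩
  have hXnonneg : ∀ (i : Fin w) τ', 0 ≤ X i τ' := by
    intro i τ'
    obtain ⟨c, _, hceq⟩ := hXmem i τ'
    rw [hceq]
    exact frechetDist_nonneg τ' c
  -- all curves in T are bounded
  have hbdd : ∀ x ∈ T, BddCurve x := by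
    intro x hxT
    by_contra hx
    obtain ⟨S', hS'sub, hS'card⟩ := Finset.exists_subset_card_eq
      (s := T.erase x) (n := k - 1) (by
        rw [Finset.card_erase_of_mem hxT, ← hn]
        omega)
    have hxS' : x ∉ S' := fun hmem => (Finset.mem_erase.mp (hS'sub hmem)).1 rfl
    set S := insert x S' with hS
    have hSsub : S ⊆ T := by
      intro y hy
      rcases Finset.mem_insert.mp hy with rfl | hy'
      · exact hxT
      · exact Finset.erase_subset x T (hS'sub hy')
    have hScard : S.card = k := by
      rw [hS, Finset.card_insert_of_notMem hxS', hS'card]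
      omega
    obtain ⟨i₀, hi₀⟩ := hCall S hSsub hScard
    have hxC : x ∈ C i₀ := by rw [hi₀]; exact Finset.mem_insert_self x S'
    have hzero : ∀ τ' ∈ T, X i₀ τ' ≤ 0 := by
      intro τ' _
      have h1 := hXle i₀ τ' x hxC
      have h2 := frechet_zero_of_unbounded hx τ'
      linarith
    have hsum : ∑ τ' ∈ T, X i₀ τ' * (1 / (n : ℝ)) ≤ 0 := by
      apply Finset.sum_nonpos
      intro τ' hτ'
      have h1 := hzero τ' hτ'
      have h2 : (0:ℝ) ≤ 1 / (n : ℝ) := by positivity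
      nlinarith
    linarith [hΦle i₀]
  have hTame : ∀ x ∈ T, ∀ y ∈ T, Tame x y := fun x hx y hy =>
    tame_of_bdd (hbdd x hx) (hbdd y hy)
  -- main argument
  intro γ hγ j τ hτ i
  obtain ⟨hγ0, hγ1⟩ := hγ
  have hτT : τ ∈ T := hUsub j hτ
  have hn1 : 1 ≤ n := by
    rw [hn]
    exact Finset.card_pos.mpr hT
  have hnR : (0:ℝ) < (n : ℝ) := by exact_mod_cast hn1
  have hnR0 : (n:ℝ) ≠ 0 := ne_of_gt hnR
  have hcU : (0:ℝ) < ((U j).card : ℝ) := by exact_mod_cast Finset.card_pos.mpr (hUne j)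
  have hcU0 : ((U j).card : ℝ) ≠ 0 := ne_of_gt hcU
  have hSd0 : 0 ≤ ∑ τ' ∈ U j, frechetDist τ' (chat j) :=
    Finset.sum_nonneg fun τ' _ => frechetDist_nonneg τ' (chat j)
  have hEΦ : Φ ≤ ∑ τ' ∈ T, X i τ' * (1 / (n : ℝ)) := hΦle i
  have hEpos : 0 < ∑ τ' ∈ T, X i τ' * (1 / (n : ℝ)) := lt_of_lt_of_le hΦpos hEΦ
  have hmj : m j = (∑ τ' ∈ U j, frechetDist τ' (chat j)) / ((U j).card : ℝ) := by
    rw [hm j, ← Finset.sum_mul]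
    field_simp
  have hD0 : 0 ≤ frechetDist τ (chat j) := frechetDist_nonneg τ (chat j)
  -- Key 1
  have key1 : X i τ ≤ frechetDist τ (chat j) + X i (chat j) := by
    obtain ⟨c, hc, hceq⟩ := hXmem i (chat j)
    have hcT : c ∈ T := hCsub i hc
    calc X i τ ≤ frechetDist τ c := hXle i τ c hc
    _ ≤ frechetDist τ (chat j) + frechetDist (chat j) c :=
        frechetDist_triangle (hTame τ hτT (chat j) (hchat j)) (hTame (chat j) (hchat j) c hcT)
    _ = frechetDist τ (chat j) + X i (chat j) := by rw [← hceq]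
  -- Key 2
  have key2 : ∀ τ' ∈ U j, X i (chat j) ≤ frechetDist τ' (chat j) + X i τ' := by
    intro τ' hτ'
    have hτ'T : τ' ∈ T := hUsub j hτ'
    obtain ⟨c, hc, hceq⟩ := hXmem i τ'
    have hcT : c ∈ T := hCsub i hc
    calc X i (chat j) ≤ frechetDist (chat j) c := hXle i (chat j) c hc
    _ ≤ frechetDist (chat j) τ' + frechetDist τ' c :=
        frechetDist_triangle (hTame (chat j) (hchat j) τ' hτ'T) (hTame τ' hτ'T c hcT)
    _ = frechetDist τ' (chat j) + X i τ' := by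
        rw [frechetDist_symm (hTame (chat j) (hchat j) τ' hτ'T)
          (hTame τ' hτ'T (chat j) (hchat j)), ← hceq]
  -- Key 3 : sum over U j
  have key3 : ((U j).card : ℝ) * X i (chat j) ≤
      (∑ τ' ∈ U j, frechetDist τ' (chat j)) + ∑ τ' ∈ U j, X i τ' := by
    have h := Finset.sum_le_sum key2
    rw [Finset.sum_const, Finset.sum_add_distrib, nsmul_eq_mul] at h
    exact h
  -- Key 4
  have key4 : ∑ τ' ∈ U j, X i τ' ≤ (n : ℝ) * ∑ τ' ∈ T, X i τ' * (1 / (n : ℝ)) := by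
    have h1 : ∑ τ' ∈ U j, X i τ' ≤ ∑ τ' ∈ T, X i τ' :=
      Finset.sum_le_sum_of_subset_of_nonneg (hUsub j) fun τ' _ _ => hXnonneg i τ'
    have h2 : (n : ℝ) * ∑ τ' ∈ T, X i τ' * (1 / (n : ℝ)) = ∑ τ' ∈ T, X i τ' := by
      rw [Finset.mul_sum]
      apply Finset.sum_congr rfl
      intro τ' _
      field_simp
    linarith
  exact final_arith (frechetDist τ (chat j)) (m j) Φ γ
    (∑ τ' ∈ T, X i τ' * (1 / (n : ℝ))) (n : ℝ) ((U j).card : ℝ) (X i τ) (X i (chat j))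
    (∑ τ' ∈ U j, frechetDist τ' (chat j)) (∑ τ' ∈ U j, X i τ')
    hγ0 hγ1 hΦpos hEΦ hnR hcU hD0 hSd0 hmj key1 key3 key4
end

section
/- Let T be a finite set of n curves with the Fréchet metric d_F, k ≤ n, γ = 1/(3nk), and let cost(T, C) = ∑_{τ∈T} min_{c∈C} d_F(τ, c) and opt = min_{C⊆T, |C|=k} cost(T, C). Let R̂ satisfy opt ≤ R̂ ≤ 3n·opt (e.g. the k-median cost of a 3-approximate k-center solution). Suppose C ⊆ T with |C| = k is locally optimal with respect to single swaps up to slack γ·R̂, i.e. for every c ∈ C and every τ ∈ T \ C: cost(T, C) ≤ cost(T, (C ∪ {τ}) \ {c}) + γ·R̂. Then cost(T, C) ≤ 6·opt. -/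
open scoped Classical

/-- `min_{c∈C} d_F(τ, c)`: the Fréchet distance from `τ` to a nearest element of `C`. -/
noncomputable def nearestDist {d : ℕ} (C : Finset (ℝ → EuclideanSpace ℝ (Fin d)))
    (τ : ℝ → EuclideanSpace ℝ (Fin d)) : ℝ :=
  sInf { r : ℝ | ∃ c ∈ C, r = frechetDist τ c }

section LSAux
open Set

/-- a valid reparameterization -/
def Valid (f : ℝ → ℝ) : Prop :=
  ContinuousOn f (Set.Icc 0 1) ∧ MonotoneOn f (Set.Icc 0 1) ∧ Set.InjOn f (Set.Icc 0 1) ∧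
    Set.MapsTo f (Set.Icc 0 1) (Set.Icc 0 1) ∧ f 0 = 0 ∧ f 1 = 1

/-- boundedness of a curve on [0,1] -/
def IsBddC {d : ℕ} (τ : ℝ → EuclideanSpace ℝ (Fin d)) : Prop :=
  ∃ M : ℝ, ∀ t ∈ Set.Icc (0:ℝ) 1, ‖τ t‖ ≤ M

variable {d : ℕ}

def FS (τ σ : ℝ → EuclideanSpace ℝ (Fin d)) : Set ℝ :=
  { r : ℝ | ∃ f : ℝ → ℝ, Valid f ∧
      r = ⨆ t : Set.Icc (0 : ℝ) 1, dist (τ (f (t : ℝ))) (σ (t : ℝ)) }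

instance : Nonempty (Set.Icc (0:ℝ) 1) := ⟨⟨0, by norm_num⟩⟩

lemma frechetDist_eq (τ σ : ℝ → EuclideanSpace ℝ (Fin d)) :
    frechetDist τ σ = sInf (FS τ σ) := by
  unfold frechetDist FS Valid
  congr 1
  ext r
  constructor
  · rintro ⟨f, h1, h2, h3, h4, h5, h6, h7⟩; exact ⟨f, ⟨h1, h2, h3, h4, h5, h6⟩, h7⟩
  · rintro ⟨f, ⟨h1, h2, h3, h4, h5, h6⟩, h7⟩; exact ⟨f, h1, h2, h3, h4, h5, h6, h7⟩

lemma valid_id : Valid (id : ℝ → ℝ) :=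
  ⟨continuousOn_id, monotoneOn_id, Set.injOn_id _, Set.mapsTo_id _, rfl, rfl⟩

lemma mem_FS {f : ℝ → ℝ} (hf : Valid f) (τ σ : ℝ → EuclideanSpace ℝ (Fin d)) :
    (⨆ t : Set.Icc (0 : ℝ) 1, dist (τ (f (t : ℝ))) (σ (t : ℝ))) ∈ FS τ σ :=
  ⟨f, hf, rfl⟩

lemma FS_nonneg {τ σ : ℝ → EuclideanSpace ℝ (Fin d)} {r : ℝ} (hr : r ∈ FS τ σ) : 0 ≤ r := by
  obtain ⟨f, _, rfl⟩ := hr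
  exact Real.iSup_nonneg fun t => dist_nonneg

lemma FS_nonempty (τ σ : ℝ → EuclideanSpace ℝ (Fin d)) : (FS τ σ).Nonempty :=
  ⟨_, mem_FS valid_id τ σ⟩

lemma FS_bddBelow (τ σ : ℝ → EuclideanSpace ℝ (Fin d)) : BddBelow (FS τ σ) :=
  ⟨0, fun _ hr => FS_nonneg hr⟩

lemma frechetDist_nonneg (τ σ : ℝ → EuclideanSpace ℝ (Fin d)) : 0 ≤ frechetDist τ σ := by
  rw [frechetDist_eq]
  exact le_csInf (FS_nonempty τ σ) fun _ hr => FS_nonneg hr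

lemma frechetDist_le_of_valid {f : ℝ → ℝ} (hf : Valid f)
    (τ σ : ℝ → EuclideanSpace ℝ (Fin d)) :
    frechetDist τ σ ≤ ⨆ t : Set.Icc (0 : ℝ) 1, dist (τ (f (t : ℝ))) (σ (t : ℝ)) := by
  rw [frechetDist_eq]
  exact csInf_le (FS_bddBelow τ σ) (mem_FS hf τ σ)

lemma frechetDist_self (τ : ℝ → EuclideanSpace ℝ (Fin d)) : frechetDist τ τ = 0 := by
  refine le_antisymm ?_ (frechetDist_nonneg τ τ)
  have := frechetDist_le_of_valid valid_id τ τ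
  simpa using this


lemma Valid.strictMonoOn {f : ℝ → ℝ} (hf : Valid f) : StrictMonoOn f (Set.Icc 0 1) := by
  intro x hx y hy hxy
  rcases lt_or_eq_of_le (hf.2.1 hx hy hxy.le) with h | h
  · exact h
  · exact absurd (hf.2.2.1 hx hy h) (ne_of_lt hxy)

/-- continuity gadget: strictly monotone surjection of [0,1] is continuous -/
lemma continuousOn_of_strictMonoOn_surjOn {f : ℝ → ℝ} (hmono : StrictMonoOn f (Set.Icc 0 1))
    (hmaps : Set.MapsTo f (Set.Icc 0 1) (Set.Icc 0 1))
    (hsurj : Set.SurjOn f (Set.Icc 0 1) (Set.Icc 0 1)) :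
    ContinuousOn f (Set.Icc 0 1) := by
  set F : Set.Icc (0:ℝ) 1 → Set.Icc (0:ℝ) 1 := hmaps.restrict f _ _ with hF
  have hFmono : StrictMono F := fun a b hab => by
    exact Subtype.coe_lt_coe.mp (by exact hmono a.2 b.2 (Subtype.coe_lt_coe.mpr hab))
  have hFsurj : Function.Surjective F := by
    rintro ⟨y, hy⟩
    obtain ⟨x, hx, hfx⟩ := hsurj hy
    exact ⟨⟨x, hx⟩, Subtype.ext hfx⟩
  have := (StrictMono.orderIsoOfSurjective F hFmono hFsurj).continuous
  rw [continuousOn_iff_continuous_restrict]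
  have hFc : Continuous F := by
    rwa [show ⇑(StrictMono.orderIsoOfSurjective F hFmono hFsurj) = F from
      StrictMono.coe_orderIsoOfSurjective F hFmono hFsurj] at this
  exact continuous_subtype_val.comp hFc

lemma valid_surjOn {f : ℝ → ℝ} (hf : Valid f) : Set.SurjOn f (Set.Icc 0 1) (Set.Icc 0 1) := by
  have := intermediate_value_Icc (by norm_num : (0:ℝ) ≤ 1) hf.1
  rw [hf.2.2.2.2.1, hf.2.2.2.2.2] at this
  exact this

/-- inverse of a valid reparameterization -/
lemma valid_inverse {f : ℝ → ℝ} (hf : Valid f) :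
    ∃ g : ℝ → ℝ, Valid g ∧ (∀ t ∈ Set.Icc (0:ℝ) 1, f (g t) = t ∧ g (f t) = t) := by
  have h01 : (0:ℝ) ≤ 1 := by norm_num
  set F : Set.Icc (0:ℝ) 1 → Set.Icc (0:ℝ) 1 := hf.2.2.2.1.restrict f _ _ with hFdef
  have hFmono : StrictMono F := fun a b hab =>
    Subtype.coe_lt_coe.mp (hf.strictMonoOn a.2 b.2 (Subtype.coe_lt_coe.mpr hab))
  have hFsurj : Function.Surjective F := by
    rintro ⟨y, hy⟩
    obtain ⟨x, hx, hfx⟩ := valid_surjOn hf hy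
    exact ⟨⟨x, hx⟩, Subtype.ext hfx⟩
  set e := StrictMono.orderIsoOfSurjective F hFmono hFsurj with he
  have hecoe : ∀ x : Set.Icc (0:ℝ) 1, (e x : ℝ) = f x := fun x => by
    rw [show ⇑e = F from StrictMono.coe_orderIsoOfSurjective F hFmono hFsurj]; rfl
  set g : ℝ → ℝ := fun t => (e.symm (Set.projIcc 0 1 h01 t) : ℝ) with hg
  have hgmem : ∀ t, g t ∈ Set.Icc (0:ℝ) 1 := fun t => (e.symm (Set.projIcc 0 1 h01 t)).2
  have hfg : ∀ t ∈ Set.Icc (0:ℝ) 1, f (g t) = t := by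
    intro t ht
    have : (e (e.symm (Set.projIcc 0 1 h01 t)) : ℝ) = t := by
      rw [e.apply_symm_apply, Set.projIcc_of_mem h01 ht]
    rwa [hecoe] at this
  have hgf : ∀ t ∈ Set.Icc (0:ℝ) 1, g (f t) = t := by
    intro t ht
    have hft : f t ∈ Set.Icc (0:ℝ) 1 := hf.2.2.2.1 ht
    have h1 : Set.projIcc 0 1 h01 (f t) = ⟨f t, hft⟩ := Set.projIcc_of_mem h01 hft
    have h2 : e ⟨t, ht⟩ = ⟨f t, hft⟩ := Subtype.ext (hecoe ⟨t, ht⟩)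
    simp only [hg, h1, ← h2, e.symm_apply_apply]
  have hgmono : StrictMonoOn g (Set.Icc 0 1) := by
    intro x hx y hy hxy
    have : Set.projIcc 0 1 h01 x < Set.projIcc 0 1 h01 y := by
      rw [Set.projIcc_of_mem h01 hx, Set.projIcc_of_mem h01 hy]
      exact Subtype.mk_lt_mk.mpr hxy
    exact Subtype.coe_lt_coe.mpr (e.symm.strictMono this)
  have hgmaps : Set.MapsTo g (Set.Icc 0 1) (Set.Icc 0 1) := fun t _ => hgmem t
  have hgsurj : Set.SurjOn g (Set.Icc 0 1) (Set.Icc 0 1) := by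
    intro y hy
    exact ⟨f y, hf.2.2.2.1 hy, hgf y hy⟩
  have hg0 : g 0 = 0 := by
    have := hgf 0 (by norm_num)
    rwa [hf.2.2.2.2.1] at this
  have hg1 : g 1 = 1 := by
    have := hgf 1 (by norm_num)
    rwa [hf.2.2.2.2.2] at this
  refine ⟨g, ⟨continuousOn_of_strictMonoOn_surjOn hgmono hgmaps hgsurj,
    hgmono.monotoneOn, hgmono.injOn, hgmaps, hg0, hg1⟩, fun t ht => ⟨hfg t ht, hgf t ht⟩⟩

lemma frechetDist_symm_le (τ σ : ℝ → EuclideanSpace ℝ (Fin d)) :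
    frechetDist σ τ ≤ frechetDist τ σ := by
  rw [frechetDist_eq τ σ]
  refine le_csInf (FS_nonempty τ σ) ?_
  rintro r ⟨f, hf, rfl⟩
  obtain ⟨g, hg, hinv⟩ := valid_inverse hf
  refine le_trans (frechetDist_le_of_valid hg σ τ) (le_of_eq ?_)
  have hptwise : ∀ t : Set.Icc (0:ℝ) 1,
      dist (σ (g (t : ℝ))) (τ (t : ℝ)) =
        dist (τ (f (g (t : ℝ)))) (σ (g (t : ℝ))) := by
    intro t
    rw [(hinv t t.2).1, dist_comm]
  rw [iSup_congr hptwise]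
  -- now `⨆ t, h1 (G t) = ⨆ t, h1 t` with `G` the bijection induced by `g`
  have hGmem : ∀ t : Set.Icc (0:ℝ) 1, g (t:ℝ) ∈ Set.Icc (0:ℝ) 1 := fun t => hg.2.2.2.1 t.2
  set G : Set.Icc (0:ℝ) 1 → Set.Icc (0:ℝ) 1 := fun t => ⟨g t, hGmem t⟩ with hGdef
  have hGsurj : Function.Surjective G := by
    rintro ⟨s, hs⟩
    refine ⟨⟨f s, hf.2.2.2.1 hs⟩, Subtype.ext ?_⟩
    exact (hinv s hs).2
  calc (⨆ t : Set.Icc (0:ℝ) 1, dist (τ (f (g (t:ℝ)))) (σ (g (t:ℝ))))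
      = ⨆ t : Set.Icc (0:ℝ) 1, dist (τ (f ((G t : ℝ)))) (σ ((G t : ℝ))) := rfl
    _ = ⨆ s : Set.Icc (0:ℝ) 1, dist (τ (f (s : ℝ))) (σ (s : ℝ)) := by
        rw [iSup, iSup]
        congr 1
        exact hGsurj.range_comp (fun s : Set.Icc (0:ℝ) 1 => dist (τ (f (s : ℝ))) (σ (s : ℝ)))

lemma frechetDist_symm (τ σ : ℝ → EuclideanSpace ℝ (Fin d)) :
    frechetDist τ σ = frechetDist σ τ :=
  le_antisymm (frechetDist_symm_le σ τ) (frechetDist_symm_le τ σ)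

lemma valid_comp {f g : ℝ → ℝ} (hf : Valid f) (hg : Valid g) : Valid (f ∘ g) := by
  refine ⟨hf.1.comp hg.1 hg.2.2.2.1, ?_, ?_, hf.2.2.2.1.comp hg.2.2.2.1, ?_, ?_⟩
  · intro x hx y hy hxy
    exact hf.2.1 (hg.2.2.2.1 hx) (hg.2.2.2.1 hy) (hg.2.1 hx hy hxy)
  · intro x hx y hy hxy
    exact hg.2.2.1 hx hy (hf.2.2.1 (hg.2.2.2.1 hx) (hg.2.2.2.1 hy) hxy)
  · show f (g 0) = 0
    rw [hg.2.2.2.2.1, hf.2.2.2.2.1]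
  · show f (g 1) = 1
    rw [hg.2.2.2.2.2, hf.2.2.2.2.2]

lemma frechetDist_triangle {τ ρ σ : ℝ → EuclideanSpace ℝ (Fin d)}
    (hτ : IsBddC τ) (hρ : IsBddC ρ) (hσ : IsBddC σ) :
    frechetDist τ σ ≤ frechetDist τ ρ + frechetDist ρ σ := by
  obtain ⟨M1, hM1⟩ := hτ
  obtain ⟨M2, hM2⟩ := hρ
  obtain ⟨M3, hM3⟩ := hσ
  have key : ∀ r1 ∈ FS τ ρ, ∀ r2 ∈ FS ρ σ, frechetDist τ σ ≤ r1 + r2 := by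
    rintro r1 ⟨f, hf, rfl⟩ r2 ⟨g, hg, rfl⟩
    have hcomp := valid_comp hf hg
    refine le_trans (frechetDist_le_of_valid hcomp τ σ) ?_
    refine ciSup_le ?_
    intro t
    have hgt : g (t : ℝ) ∈ Set.Icc (0:ℝ) 1 := hg.2.2.2.1 t.2
    have htri : dist (τ ((f ∘ g) (t : ℝ))) (σ (t : ℝ)) ≤
        dist (τ (f (g (t : ℝ)))) (ρ (g (t : ℝ))) + dist (ρ (g (t : ℝ))) (σ (t : ℝ)) :=
      dist_triangle _ _ _
    refine htri.trans (add_le_add ?_ ?_)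
    · have hbdd : BddAbove (Set.range fun s : Set.Icc (0:ℝ) 1 =>
          dist (τ (f (s : ℝ))) (ρ (s : ℝ))) := by
        refine ⟨M1 + M2, ?_⟩
        rintro x ⟨s, rfl⟩
        exact (dist_le_norm_add_norm _ _).trans
          (add_le_add (hM1 _ (hf.2.2.2.1 s.2)) (hM2 _ s.2))
      exact le_ciSup hbdd (⟨g (t : ℝ), hgt⟩ : Set.Icc (0:ℝ) 1)
    · have hbdd : BddAbove (Set.range fun s : Set.Icc (0:ℝ) 1 =>
          dist (ρ (g (s : ℝ))) (σ (s : ℝ))) := by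
        refine ⟨M2 + M3, ?_⟩
        rintro x ⟨s, rfl⟩
        exact (dist_le_norm_add_norm _ _).trans
          (add_le_add (hM2 _ (hg.2.2.2.1 s.2)) (hM3 _ s.2))
      exact le_ciSup hbdd t
  rw [frechetDist_eq τ ρ, frechetDist_eq ρ σ]
  have h2 : ∀ r1 ∈ FS τ ρ, frechetDist τ σ - r1 ≤ sInf (FS ρ σ) := by
    intro r1 h1
    refine le_csInf (FS_nonempty ρ σ) fun r2 h2 => ?_
    linarith [key r1 h1 r2 h2]
  have h3 : frechetDist τ σ - sInf (FS ρ σ) ≤ sInf (FS τ ρ) := by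
    refine le_csInf (FS_nonempty τ ρ) fun r1 h1 => ?_
    linarith [h2 r1 h1]
  linarith


lemma nearestDist_set_eq (C : Finset (ℝ → EuclideanSpace ℝ (Fin d)))
    (τ : ℝ → EuclideanSpace ℝ (Fin d)) :
    { r : ℝ | ∃ c ∈ C, r = frechetDist τ c } = ↑(C.image fun c => frechetDist τ c) := by
  ext r
  simp [eq_comm]

lemma nearestDist_le {C : Finset (ℝ → EuclideanSpace ℝ (Fin d))}
    {c : ℝ → EuclideanSpace ℝ (Fin d)} (hc : c ∈ C) (τ : ℝ → EuclideanSpace ℝ (Fin d)) :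
    nearestDist C τ ≤ frechetDist τ c := by
  unfold nearestDist
  refine csInf_le ⟨0, ?_⟩ ⟨c, hc, rfl⟩
  rintro r ⟨c', _, rfl⟩
  exact frechetDist_nonneg τ c'

lemma nearestDist_nonneg (C : Finset (ℝ → EuclideanSpace ℝ (Fin d)))
    (τ : ℝ → EuclideanSpace ℝ (Fin d)) : 0 ≤ nearestDist C τ := by
  unfold nearestDist
  rcases C.eq_empty_or_nonempty with rfl | hC
  · simp [Real.sInf_empty]
  · refine le_csInf ⟨frechetDist τ hC.choose, hC.choose, hC.choose_spec, rfl⟩ ?_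
    rintro r ⟨c', _, rfl⟩
    exact frechetDist_nonneg τ c'

lemma nearestDist_exists {C : Finset (ℝ → EuclideanSpace ℝ (Fin d))} (hC : C.Nonempty)
    (τ : ℝ → EuclideanSpace ℝ (Fin d)) :
    ∃ c ∈ C, nearestDist C τ = frechetDist τ c := by
  unfold nearestDist
  rw [nearestDist_set_eq]
  have hne : ((C.image fun c => frechetDist τ c) : Set ℝ).Nonempty := by
    obtain ⟨c, hc⟩ := hC
    exact ⟨frechetDist τ c, by simp [Finset.mem_image]; exact ⟨c, hc, rfl⟩⟩
  have hfin : ((C.image fun c => frechetDist τ c) : Set ℝ).Finite := (C.image _).finite_toSet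
  have := hne.csInf_mem hfin
  rw [Finset.coe_image] at this ⊢
  obtain ⟨c, hc, hval⟩ := this
  exact ⟨c, hc, hval.symm⟩

/-- dependent choice along ℕ with a decreasing real value -/
lemma dep_choice_lt {Q : ℕ → ℝ → Prop} (x0 : ℝ) (h0 : Q 0 x0)
    (step : ∀ i x, Q i x → ∃ y, Q (i + 1) y ∧ y < x) :
    ∃ p : ℕ → ℝ, p 0 = x0 ∧ (∀ i, Q i (p i)) ∧ ∀ i, p (i + 1) < p i := by
  choose! f hf1 hf2 using step
  set p : ℕ → ℝ := fun n => Nat.rec x0 (fun i prev => f i prev) n with hp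
  have hQ : ∀ i, Q i (p i) := by
    intro i
    induction i with
    | zero => exact h0
    | succ i ih => exact hf1 i (p i) ih
  exact ⟨p, rfl, hQ, fun i => hf2 i (p i) (hQ i)⟩

section R
variable (τ u : ℝ → EuclideanSpace ℝ (Fin d)) (a : ℝ)

/-- existence of sequences for the right-cluster construction -/
lemma right_seq (ha : a ∈ Set.Icc (0:ℝ) 1)
    (HR : ∀ ε > 0, ∀ M : ℝ, ∃ t ∈ Set.Icc (0:ℝ) 1, a < t ∧ t ≤ a + ε ∧ M < ‖τ t‖) :
    ∃ p : ℕ → ℝ, p 0 = (a+1)/2 ∧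
      (∀ i, a < p i ∧ p i ≤ a + ((a+1)/2 - a) / 2^i ∧ p i ∈ Set.Icc (0:ℝ) 1 ∧
        (1 ≤ i → ‖u (a + ((a+1)/2 - a) / 2^i)‖ + (i:ℝ) < ‖τ (p i)‖)) ∧
      ∀ i, p (i + 1) < p i := by
  have ha1 : a < 1 := by
    obtain ⟨t, ht, hat, ht1, _⟩ := HR 1 one_pos 0
    exact lt_of_lt_of_le hat ht.2
  set b : ℝ := (a + 1) / 2 with hb
  have hab : a < b := by rw [hb]; linarith
  have hb1 : b < 1 := by rw [hb]; linarith
  have hba : (0:ℝ) < b - a := by linarith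
  set Q : ℕ → ℝ → Prop := fun i x => a < x ∧ x ≤ a + (b - a) / 2^i ∧ x ∈ Set.Icc (0:ℝ) 1 ∧
    (1 ≤ i → ‖u (a + (b - a) / 2^i)‖ + (i:ℝ) < ‖τ x‖) with hQdef
  have h0 : Q 0 b := by
    refine ⟨hab, by norm_num, ⟨by linarith [ha.1], hb1.le⟩, by omega⟩
  have step : ∀ i x, Q i x → ∃ y, Q (i + 1) y ∧ y < x := by
    intro i x hx
    have hxa : 0 < x - a := by linarith [hx.1]
    have hpow : (0:ℝ) < (b - a) / 2^(i+1) := by positivity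
    set ε : ℝ := min (x - a) ((b - a) / 2^(i+1)) / 2 with hε
    have hεpos : 0 < ε := by
      apply div_pos _ two_pos
      exact lt_min hxa hpow
    obtain ⟨t, htIcc, hat, htε, hnorm⟩ := HR ε hεpos (‖u (a + (b - a) / 2^(i+1))‖ + ((i:ℝ)+1))
    refine ⟨t, ⟨hat, ?_, htIcc, ?_⟩, ?_⟩
    · have : ε ≤ (b - a) / 2^(i+1) := by
        rw [hε]
        calc min (x - a) ((b - a) / 2^(i+1)) / 2 ≤ ((b - a) / 2^(i+1)) / 2 := by
              gcongr; exact min_le_right _ _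
          _ ≤ (b - a) / 2^(i+1) := by linarith [hpow]
      linarith
    · intro _
      push_cast
      exact hnorm
    · have : ε ≤ (x - a) / 2 := by
        rw [hε]; gcongr; exact min_le_left _ _
      linarith
  obtain ⟨p, hp0, hpQ, hplt⟩ := dep_choice_lt b h0 step
  exact ⟨p, hp0, hpQ, hplt⟩

end R

/-- Piecewise-linear transport: a valid reparameterization sending `s (i+1)` to `p (i+1)`. -/
lemma pl_transport (a b : ℝ) (hab : a < b) (ha0 : 0 ≤ a) (hb1 : b ≤ 1)
    (s p : ℕ → ℝ)
    (hs0 : s 0 = b) (hp0 : p 0 = b)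
    (hs_anti : StrictAnti s) (hp_anti : StrictAnti p)
    (hs_gt : ∀ i, a < s i) (hp_gt : ∀ i, a < p i)
    (hs_lim : ∀ x, a < x → ∃ i, s (i + 1) < x)
    (hp_lim : ∀ x, a < x → ∃ i, p (i + 1) < x) :
    ∃ f : ℝ → ℝ, Valid f ∧ ∀ i, f (s (i + 1)) = p (i + 1) := by
  have hΔs : ∀ j, 0 < s j - s (j + 1) := fun j => sub_pos.mpr (hs_anti (Nat.lt_succ_self j))
  have hΔp : ∀ j, 0 < p j - p (j + 1) := fun j => sub_pos.mpr (hp_anti (Nat.lt_succ_self j))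
  have hs_le_b : ∀ i, s i ≤ b := fun i => by
    rcases Nat.eq_zero_or_pos i with rfl | hi
    · exact hs0.le
    · exact (hs_anti hi).le.trans hs0.le
  have hp_le_b : ∀ i, p i ≤ b := fun i => by
    rcases Nat.eq_zero_or_pos i with rfl | hi
    · exact hp0.le
    · exact (hp_anti hi).le.trans hp0.le
  set A : ℕ → ℝ → ℝ := fun j x =>
    p (j + 1) + (x - s (j + 1)) * (p j - p (j + 1)) / (s j - s (j + 1)) with hA
  -- strict monotonicity of each linear piece
  have hA_mono : ∀ j {x y : ℝ}, x < y → A j x < A j y := by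
    intro j x y hxy
    have h1 := hΔs j; have h2 := hΔp j
    have key : (x - s (j+1)) * (p j - p (j+1)) / (s j - s (j+1)) <
        (y - s (j+1)) * (p j - p (j+1)) / (s j - s (j+1)) := by
      apply div_lt_div_of_pos_right _ h1
      exact mul_lt_mul_of_pos_right (by linarith) h2
    simp only [hA]
    linarith
  have hA_left : ∀ j, A j (s (j + 1)) = p (j + 1) := by
    intro j; simp [hA]
  have hA_right : ∀ j, A j (s j) = p j := by
    intro j
    have h1 := (hΔs j).ne'
    simp only [hA]
    rw [mul_div_right_comm, div_self h1, one_mul]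
    ring
  -- the index function
  have hJex : ∀ x, a < x → ∃ i, s (i + 1) < x := hs_lim
  set J : ℝ → ℕ := fun x => if hx : a < x then Nat.find (hJex x hx) else 0 with hJ
  have hJ_spec : ∀ x (hx : a < x), s (J x + 1) < x := by
    intro x hx
    simp only [hJ, dif_pos hx]
    exact Nat.find_spec (hJex x hx)
  have hJ_min : ∀ x (hx : a < x) (i : ℕ), i < J x → x ≤ s (i + 1) := by
    intro x hx i hi
    simp only [hJ, dif_pos hx] at hi
    have := Nat.find_min (hJex x hx) hi
    linarith [not_lt.mp this]
  have hJ_eq : ∀ x (hx : a < x) (j : ℕ), s (j + 1) < x → (∀ i, i < j → x ≤ s (i + 1)) →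
      J x = j := by
    intro x hx j h1 h2
    refine le_antisymm ?_ ?_
    · simp only [hJ, dif_pos hx]
      exact Nat.find_min' (hJex x hx) h1
    · by_contra hlt
      push_neg at hlt
      exact absurd (hJ_spec x hx) (not_lt.mpr (h2 _ hlt))
  have hx_le_sJ : ∀ x, a < x → x < b → x ≤ s (J x) := by
    intro x hx hxb
    rcases Nat.eq_zero_or_pos (J x) with h0 | hpos
    · rw [h0, hs0]; exact hxb.le
    · have hlt : J x - 1 < J x := by omega
      have h := hJ_min x hx (J x - 1) hlt
      have heq : J x - 1 + 1 = J x := by omega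
      rwa [heq] at h
  have hJ_anti : ∀ x y, a < x → x ≤ y → J y ≤ J x := by
    intro x y hx hxy
    have hy : a < y := lt_of_lt_of_le hx hxy
    simp only [hJ, dif_pos hx, dif_pos hy]
    exact Nat.find_min' (hJex y hy) (lt_of_lt_of_le (Nat.find_spec (hJex x hx)) hxy)
  -- bounds on interpolated values
  have hA_low : ∀ x, a < x → x < b → p (J x + 1) < A (J x) x := by
    intro x hx hxb
    have := hA_mono (J x) (hJ_spec x hx)
    rwa [hA_left (J x)] at this
  have hA_high : ∀ x, a < x → x < b → A (J x) x ≤ p (J x) := by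
    intro x hx hxb
    rcases lt_or_eq_of_le (hx_le_sJ x hx hxb) with h | h
    · exact le_of_lt (by rw [← hA_right (J x)]; exact hA_mono (J x) h)
    · exact le_of_eq ((congrArg (A (J x)) h).trans (hA_right (J x)))
  have hA_gt_a : ∀ x, a < x → x < b → a < A (J x) x := fun x hx hxb =>
    (hp_gt (J x + 1)).trans (hA_low x hx hxb)
  have hA_lt_b : ∀ x, a < x → x < b → A (J x) x < b := by
    intro x hx hxb
    rcases Nat.eq_zero_or_pos (J x) with h0 | hpos
    · have hxs0 : x < s 0 := by rw [hs0]; exact hxb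
      have := hA_mono (J x) hxs0
      rw [h0] at this ⊢
      rw [hA_right 0, hp0] at this
      exact this
    · refine lt_of_le_of_lt (hA_high x hx hxb) ?_
      calc p (J x) ≤ p 1 := hp_anti.antitone hpos
        _ < p 0 := hp_anti Nat.zero_lt_one
        _ = b := hp0
  -- the reparameterization
  set f : ℝ → ℝ := fun x => if a < x ∧ x < b then A (J x) x else x with hf
  have hf_eq : ∀ x, a < x → x < b → f x = A (J x) x := by
    intro x h1 h2; simp only [hf, if_pos (⟨h1, h2⟩ : a < x ∧ x < b)]
  have hf_id : ∀ x, ¬(a < x ∧ x < b) → f x = x := by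
    intro x h; simp only [hf, if_neg h]
  have hmono : StrictMonoOn f (Set.Icc 0 1) := by
    intro x hx y hy hxy
    by_cases cx : a < x ∧ x < b <;> by_cases cy : a < y ∧ y < b
    · rw [hf_eq x cx.1 cx.2, hf_eq y cy.1 cy.2]
      have hjle : J y ≤ J x := hJ_anti x y cx.1 hxy.le
      rcases lt_or_eq_of_le hjle with hj | hj
      · calc A (J x) x ≤ p (J x) := hA_high x cx.1 cx.2
          _ ≤ p (J y + 1) := hp_anti.antitone (Nat.succ_le_of_lt hj)
          _ < A (J y) y := hA_low y cy.1 cy.2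
      · rw [hj]; exact hA_mono _ hxy
    · rw [hf_eq x cx.1 cx.2, hf_id y cy]
      rcases not_and_or.mp cy with h | h
      · exact absurd (cx.1.trans hxy) h
      · exact lt_of_lt_of_le (hA_lt_b x cx.1 cx.2) (not_lt.mp h)
    · rw [hf_id x cx, hf_eq y cy.1 cy.2]
      rcases not_and_or.mp cx with h | h
      · exact lt_of_le_of_lt (not_lt.mp h) (hA_gt_a y cy.1 cy.2)
      · exact absurd (hxy.trans cy.2) (by linarith [not_lt.mp h])
    · rw [hf_id x cx, hf_id y cy]; exact hxy
  have hmaps : Set.MapsTo f (Set.Icc 0 1) (Set.Icc 0 1) := by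
    intro x hx
    by_cases cx : a < x ∧ x < b
    · rw [hf_eq x cx.1 cx.2]
      constructor
      · linarith [hA_gt_a x cx.1 cx.2]
      · linarith [hA_lt_b x cx.1 cx.2]
    · rw [hf_id x cx]; exact hx
  have hsurj : Set.SurjOn f (Set.Icc 0 1) (Set.Icc 0 1) := by
    intro y hy
    by_cases cy : a < y ∧ y < b
    · -- invert the piecewise linear map
      have hpey : ∃ i, p (i + 1) < y := hp_lim y cy.1
      set j : ℕ := Nat.find hpey with hj
      have hyp1 : p (j + 1) < y := Nat.find_spec hpey
      have hyp2 : y ≤ p j := by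
        rcases Nat.eq_zero_or_pos j with h0 | hpos
        · rw [h0, hp0]; exact cy.2.le
        · have h := Nat.find_min hpey (show j - 1 < j by omega)
          have heq : j - 1 + 1 = j := by omega
          rw [heq] at h
          linarith [not_lt.mp h]
      set x : ℝ := s (j + 1) + (y - p (j + 1)) * (s j - s (j + 1)) / (p j - p (j + 1)) with hxd
      have hx1 : s (j + 1) < x := by
        have : 0 < (y - p (j + 1)) * (s j - s (j + 1)) / (p j - p (j + 1)) :=
          div_pos (mul_pos (by linarith) (hΔs j)) (hΔp j)
        simp only [hxd]; linarith
      have hx2 : x ≤ s j := by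
        have : (y - p (j + 1)) * (s j - s (j + 1)) / (p j - p (j + 1)) ≤ s j - s (j + 1) := by
          rw [div_le_iff₀ (hΔp j)]
          have : (y - p (j+1)) ≤ (p j - p (j+1)) := by linarith
          nlinarith [hΔs j]
        simp only [hxd]; linarith
      have hxa : a < x := (hs_gt (j + 1)).trans hx1
      have hxb : x < b := by
        rcases Nat.eq_zero_or_pos j with h0 | hpos
        · -- strict since y < p 0 = b
          have hstrict : (y - p (j + 1)) * (s j - s (j + 1)) / (p j - p (j + 1)) <
              s j - s (j + 1) := by
            rw [div_lt_iff₀ (hΔp j)]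
            have hyb : y < p j := by rw [h0, hp0]; exact cy.2
            nlinarith [hΔs j]
          have : x < s j := by simp only [hxd]; linarith
          calc x < s j := this
            _ ≤ b := hs_le_b j
        · calc x ≤ s j := hx2
            _ < s 0 := hs_anti hpos
            _ = b := hs0
      have hJx : J x = j := by
        refine hJ_eq x hxa j hx1 ?_
        intro i hi
        calc x ≤ s j := hx2
          _ ≤ s (i + 1) := hs_anti.antitone (Nat.succ_le_of_lt hi)
      refine ⟨x, ⟨by linarith, by linarith⟩, ?_⟩
      rw [hf_eq x hxa hxb, hJx]
      show p (j + 1) + (x - s (j + 1)) * (p j - p (j + 1)) / (s j - s (j + 1)) = y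
      have hxs : x - s (j + 1) = (y - p (j + 1)) * (s j - s (j + 1)) / (p j - p (j + 1)) := by
        simp only [hxd]; ring
      rw [hxs, div_mul_cancel₀ _ (hΔp j).ne', mul_div_assoc, div_self (hΔs j).ne', mul_one]
      ring
    · exact ⟨y, hy, hf_id y cy⟩
  have hf0 : f 0 = 0 := hf_id 0 (by intro h; linarith [h.1])
  have hf1 : f 1 = 1 := hf_id 1 (by intro h; linarith [h.2])
  refine ⟨f, ⟨continuousOn_of_strictMonoOn_surjOn hmono hmaps hsurj,
    hmono.monotoneOn, hmono.injOn, hmaps, hf0, hf1⟩, ?_⟩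
  intro i
  have h1 : a < s (i + 1) := hs_gt (i + 1)
  have h2 : s (i + 1) < b := by rw [← hs0]; exact hs_anti (Nat.succ_pos i)
  rw [hf_eq _ h1 h2]
  have hJs : J (s (i + 1)) = i + 1 := by
    refine hJ_eq _ h1 (i + 1) (hs_anti (Nat.lt_succ_self (i + 1))) ?_
    intro i' hi'
    exact hs_anti.antitone (Nat.succ_le_of_lt hi')
  rw [hJs, hA_right]

lemma exists_side_cluster {τ : ℝ → EuclideanSpace ℝ (Fin d)} (hτ : ¬ IsBddC τ) :
    ∃ a ∈ Set.Icc (0:ℝ) 1,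
      (∀ ε > 0, ∀ M : ℝ, ∃ t ∈ Set.Icc (0:ℝ) 1, a < t ∧ t ≤ a + ε ∧ M < ‖τ t‖) ∨
      (∀ ε > 0, ∀ M : ℝ, ∃ t ∈ Set.Icc (0:ℝ) 1, a - ε ≤ t ∧ t < a ∧ M < ‖τ t‖) := by
  unfold IsBddC at hτ
  push_neg at hτ
  have hseq : ∀ n : ℕ, ∃ t ∈ Set.Icc (0:ℝ) 1, (n:ℝ) < ‖τ t‖ := fun n => hτ n
  choose x hx hxn using hseq
  obtain ⟨a, ha, φ, hφ, hconv⟩ := isCompact_Icc.tendsto_subseq hx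
  have hcluster : ∀ ε > 0, ∀ M : ℝ, ∃ t ∈ Set.Icc (0:ℝ) 1, |t - a| < ε ∧ M < ‖τ t‖ := by
    intro ε hε M
    have := Metric.tendsto_atTop.mp hconv ε hε
    obtain ⟨N, hN⟩ := this
    set n := max N ⌈M⌉₊ with hn
    refine ⟨x (φ n), hx _, ?_, ?_⟩
    · have := hN n (le_max_left _ _)
      rwa [Real.dist_eq] at this
    · calc M ≤ (⌈M⌉₊ : ℝ) := Nat.le_ceil M
        _ ≤ (n : ℝ) := by exact_mod_cast Nat.cast_le.mpr (le_max_right _ _)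
        _ ≤ (φ n : ℝ) := by exact_mod_cast hφ.le_apply
        _ < ‖τ (x (φ n))‖ := hxn (φ n)
  refine ⟨a, ha, ?_⟩
  by_contra hboth
  push_neg at hboth
  obtain ⟨⟨ε1, hε1, M1, h1⟩, ⟨ε2, hε2, M2, h2⟩⟩ := hboth
  obtain ⟨t, ht, htd, htM⟩ := hcluster (min ε1 ε2) (lt_min hε1 hε2)
    (max (max M1 M2) ‖τ a‖)
  rcases lt_trichotomy t a with h | h | h
  · have h2' := h2 t ht (by cases abs_lt.mp htd; linarith [min_le_right ε1 ε2]) h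
    have : M2 ≤ max (max M1 M2) ‖τ a‖ := le_max_of_le_left (le_max_right _ _)
    linarith
  · rw [h] at htM
    linarith [le_max_right (max M1 M2) ‖τ a‖]
  · have h1' := h1 t ht h (by cases abs_lt.mp htd; linarith [min_le_left ε1 ε2])
    have : M1 ≤ max (max M1 M2) ‖τ a‖ := le_max_of_le_left (le_max_left _ _)
    linarith

lemma right_unbdd (τ u : ℝ → EuclideanSpace ℝ (Fin d)) (a : ℝ)
    (ha : a ∈ Set.Icc (0:ℝ) 1)
    (HR : ∀ ε > 0, ∀ M : ℝ, ∃ t ∈ Set.Icc (0:ℝ) 1, a < t ∧ t ≤ a + ε ∧ M < ‖τ t‖) :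
    ∃ f : ℝ → ℝ, Valid f ∧
      ¬ BddAbove (Set.range fun t : Set.Icc (0:ℝ) 1 => dist (τ (f (t:ℝ))) (u (t:ℝ))) := by
  have ha1 : a < 1 := by
    obtain ⟨t, ht, hat, _, _⟩ := HR 1 one_pos 0
    exact lt_of_lt_of_le hat ht.2
  set b : ℝ := (a + 1) / 2 with hbdef
  have hab : a < b := by rw [hbdef]; linarith
  have hb1 : b ≤ 1 := by rw [hbdef]; linarith
  have hba : (0:ℝ) < b - a := by linarith
  set s : ℕ → ℝ := fun i => a + (b - a) / 2^i with hsdef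
  have hs0 : s 0 = b := by simp [hsdef]
  have hs_anti : StrictAnti s := by
    intro i j hij
    simp only [hsdef]
    have h2 : (2:ℝ)^i < 2^j := by
      apply pow_lt_pow_right₀ one_lt_two hij
    have := div_lt_div_of_pos_left hba (pow_pos two_pos i) h2
    linarith
  have hs_gt : ∀ i, a < s i := by
    intro i
    simp only [hsdef]
    have : (0:ℝ) < (b - a) / 2^i := div_pos hba (pow_pos two_pos i)
    linarith
  have hs_le : ∀ i, s i ≤ b := by
    intro i
    simp only [hsdef]
    have h1 : (b - a) / 2^i ≤ (b - a) / 2^0 := by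
      apply div_le_div_of_nonneg_left hba.le (pow_pos two_pos 0)
        (one_le_pow₀ one_le_two)
    simp at h1
    linarith
  have hs_mem : ∀ i, s i ∈ Set.Icc (0:ℝ) 1 :=
    fun i => ⟨le_of_lt (lt_of_le_of_lt ha.1 (hs_gt i)), (hs_le i).trans hb1⟩
  have hs_lim : ∀ x, a < x → ∃ i, s (i + 1) < x := by
    intro x hx
    obtain ⟨m, hm⟩ := exists_pow_lt_of_lt_one (x := (x - a) / (b - a))
      (div_pos (by linarith) hba) (by norm_num : (1:ℝ)/2 < 1)
    refine ⟨m, ?_⟩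
    simp only [hsdef]
    have key : (b - a) / 2^(m+1) < x - a := by
      have h1 : ((1:ℝ)/2)^(m+1) < (x - a)/(b - a) := by
        calc ((1:ℝ)/2)^(m+1) ≤ ((1:ℝ)/2)^m := by
              apply pow_le_pow_of_le_one (by norm_num) (by norm_num) (Nat.le_succ m)
          _ < (x - a)/(b - a) := hm
      have h2 : (b - a) * (((1:ℝ)/2)^(m+1)) < (b - a) * ((x - a)/(b - a)) :=
        mul_lt_mul_of_pos_left h1 hba
      rw [mul_div_cancel₀ _ hba.ne'] at h2
      calc (b - a) / 2^(m+1) = (b - a) * ((1:ℝ)/2)^(m+1) := by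
            rw [div_pow, one_pow]; ring
        _ < x - a := h2
    linarith
  obtain ⟨hp0, hpQ, hplt⟩ := (right_seq τ u a ha HR).choose_spec
  set p : ℕ → ℝ := (right_seq τ u a ha HR).choose with hpdef
  have hp_anti : StrictAnti p := strictAnti_nat_of_succ_lt hplt
  have hp_gt : ∀ i, a < p i := fun i => (hpQ i).1
  have hp_lim : ∀ x, a < x → ∃ i, p (i + 1) < x := by
    intro x hx
    obtain ⟨i, hi⟩ := hs_lim x hx
    exact ⟨i, lt_of_le_of_lt ((hpQ (i+1)).2.1) hi⟩
  obtain ⟨f, hfvalid, hfs⟩ := pl_transport a b hab ha.1 hb1 s p hs0 hp0 hs_anti hp_anti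
    hs_gt hp_gt hs_lim hp_lim
  refine ⟨f, hfvalid, ?_⟩
  rintro ⟨B, hB⟩
  set i : ℕ := ⌈B⌉₊ with hi
  have hmem : dist (τ (f (s (i+1)))) (u (s (i+1))) ∈
      Set.range fun t : Set.Icc (0:ℝ) 1 => dist (τ (f (t:ℝ))) (u (t:ℝ)) :=
    ⟨⟨s (i+1), hs_mem (i+1)⟩, rfl⟩
  have hle := hB hmem
  have hnorm := (hpQ (i+1)).2.2.2 (by omega)
  rw [hfs i] at hle
  have hdist : ‖τ (p (i+1))‖ - ‖u (s (i+1))‖ ≤ dist (τ (p (i+1))) (u (s (i+1))) := by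
    rw [dist_eq_norm]
    exact norm_sub_norm_le _ _
  have hBi : B ≤ (i:ℝ) := Nat.le_ceil B
  have : (i:ℝ) + 1 ≤ dist (τ (p (i+1))) (u (s (i+1))) := by
    have : ‖u (s (i+1))‖ + ((i:ℝ)+1) < ‖τ (p (i+1))‖ := by
      have := hnorm
      push_cast at this ⊢
      convert this using 3 <;> simp [hsdef, hbdef]
    linarith
  linarith

lemma unbdd_exists_valid {τ u : ℝ → EuclideanSpace ℝ (Fin d)} (hτ : ¬ IsBddC τ) :
    ∃ f : ℝ → ℝ, Valid f ∧
      ¬ BddAbove (Set.range fun t : Set.Icc (0:ℝ) 1 => dist (τ (f (t:ℝ))) (u (t:ℝ))) := by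
  obtain ⟨a, ha, hside⟩ := exists_side_cluster hτ
  rcases hside with HR | HL
  · exact right_unbdd τ u a ha HR
  · -- mirror
    set τ' : ℝ → EuclideanSpace ℝ (Fin d) := fun t => τ (1 - t) with hτ'
    set u' : ℝ → EuclideanSpace ℝ (Fin d) := fun t => u (1 - t) with hu'
    have ha' : 1 - a ∈ Set.Icc (0:ℝ) 1 := ⟨by linarith [ha.2], by linarith [ha.1]⟩
    have HR' : ∀ ε > 0, ∀ M : ℝ, ∃ t ∈ Set.Icc (0:ℝ) 1,
        1 - a < t ∧ t ≤ (1 - a) + ε ∧ M < ‖τ' t‖ := by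
      intro ε hε M
      obtain ⟨t, ht, h1, h2, h3⟩ := HL ε hε M
      refine ⟨1 - t, ⟨by linarith [ht.2], by linarith [ht.1]⟩, by linarith, by linarith, ?_⟩
      simp only [hτ']
      rw [show (1:ℝ) - (1 - t) = t by ring]
      exact h3
    obtain ⟨f', hf'valid, hf'unbdd⟩ := right_unbdd τ' u' (1 - a) ha' HR'
    set f : ℝ → ℝ := fun x => 1 - f' (1 - x) with hfdef
    have hmem : ∀ x : ℝ, x ∈ Set.Icc (0:ℝ) 1 → (1 - x) ∈ Set.Icc (0:ℝ) 1 :=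
      fun x hx => ⟨by linarith [hx.2], by linarith [hx.1]⟩
    have hfvalid : Valid f := by
      refine ⟨?_, ?_, ?_, ?_, ?_, ?_⟩
      · have h1 : ContinuousOn (fun x : ℝ => 1 - x) (Set.Icc 0 1) :=
          (continuous_const.sub continuous_id).continuousOn
        have h2 : ContinuousOn (fun x : ℝ => f' (1 - x)) (Set.Icc 0 1) :=
          hf'valid.1.comp h1 (fun x hx => hmem x hx)
        exact (continuous_const.continuousOn).sub h2
      · intro x hx y hy hxy
        have := hf'valid.2.1 (hmem y hy) (hmem x hx) (by linarith)
        simp only [hfdef]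
        linarith
      · intro x hx y hy hxy
        simp only [hfdef] at hxy
        have : f' (1 - x) = f' (1 - y) := by linarith
        have := hf'valid.2.2.1 (hmem x hx) (hmem y hy) this
        linarith
      · intro x hx
        have h := hf'valid.2.2.2.1 (hmem x hx)
        have hfx : f x = 1 - f' (1 - x) := rfl
        exact ⟨by rw [hfx]; linarith [h.2], by rw [hfx]; linarith [h.1]⟩
      · simp only [hfdef]
        rw [show (1:ℝ) - 0 = 1 by ring, hf'valid.2.2.2.2.2]
        ring
      · simp only [hfdef]
        rw [show (1:ℝ) - 1 = 0 by ring, hf'valid.2.2.2.2.1]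
        ring
    refine ⟨f, hfvalid, ?_⟩
    intro hbdd
    apply hf'unbdd
    obtain ⟨B, hB⟩ := hbdd
    refine ⟨B, ?_⟩
    rintro x ⟨⟨t, ht⟩, rfl⟩
    have h1t : (1 - t) ∈ Set.Icc (0:ℝ) 1 := hmem t ht
    show dist (τ' (f' t)) (u' t) ≤ B
    have heq : dist (τ' (f' t)) (u' t) = dist (τ (f (1 - t))) (u (1 - t)) := by
      simp only [hτ', hu', hfdef]
      rw [show (1:ℝ) - (1 - t) = t by ring]
    rw [heq]
    exact hB ⟨⟨1 - t, h1t⟩, rfl⟩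

lemma frechet_zero_of_family {τ u : ℝ → EuclideanSpace ℝ (Fin d)}
    (h : ∃ f : ℝ → ℝ, Valid f ∧
      ¬ BddAbove (Set.range fun t : Set.Icc (0:ℝ) 1 => dist (τ (f (t:ℝ))) (u (t:ℝ)))) :
    frechetDist τ u = 0 := by
  obtain ⟨f, hf, hunb⟩ := h
  have hsup : (⨆ t : Set.Icc (0 : ℝ) 1, dist (τ (f (t : ℝ))) (u (t : ℝ))) = 0 :=
    Real.iSup_of_not_bddAbove hunb
  refine le_antisymm ?_ (frechetDist_nonneg τ u)
  rw [frechetDist_eq]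
  have := csInf_le (FS_bddBelow τ u) (mem_FS hf τ u)
  rwa [hsup] at this

lemma frechet_zero_left {τ u : ℝ → EuclideanSpace ℝ (Fin d)} (hτ : ¬ IsBddC τ) :
    frechetDist τ u = 0 :=
  frechet_zero_of_family (unbdd_exists_valid hτ)

lemma frechet_zero_right {τ u : ℝ → EuclideanSpace ℝ (Fin d)} (hu : ¬ IsBddC u) :
    frechetDist τ u = 0 := by
  by_cases hτ : IsBddC τ
  · refine frechet_zero_of_family ⟨id, valid_id, ?_⟩
    rintro ⟨B, hB⟩
    obtain ⟨M, hM⟩ := hτ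
    apply hu
    refine ⟨B + M, ?_⟩
    intro t ht
    have hmem := hB (Set.mem_range_self (⟨t, ht⟩ : Set.Icc (0:ℝ) 1))
    simp only [id] at hmem
    have : ‖u t‖ - ‖τ t‖ ≤ dist (τ t) (u t) := by
      rw [dist_comm, dist_eq_norm]
      exact norm_sub_norm_le _ _
    have hMt := hM t ht
    linarith
  · exact frechet_zero_left hτ


set_option maxHeartbeats 1000000 in
lemma arya {k : ℕ} (hk : 0 < k) (T C Cstar : Finset (ℝ → EuclideanSpace ℝ (Fin d)))
    (hAllBdd : ∀ τ ∈ T, IsBddC τ)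
    (hCsub : C ⊆ T) (hCcard : C.card = k)
    (hCssub : Cstar ⊆ T) (hCscard : Cstar.card = k)
    (slack : ℝ) (hslack : 0 ≤ slack)
    (hlocal : ∀ c ∈ C, ∀ τ ∈ T, τ ∉ C →
      ∑ τ' ∈ T, nearestDist C τ' ≤
        ∑ τ' ∈ T, nearestDist (insert τ (C.erase c)) τ' + slack) :
    ∑ τ ∈ T, nearestDist C τ ≤ 5 * (∑ τ ∈ T, nearestDist Cstar τ) + k * slack := by
  classical
  have hCne : C.Nonempty := Finset.card_pos.mp (hCcard ▸ hk)
  have hCsne : Cstar.Nonempty := Finset.card_pos.mp (hCscard ▸ hk)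
  -- nearest-center maps
  have hphiex : ∀ x : ℝ → EuclideanSpace ℝ (Fin d),
      ∃ c ∈ C, ∀ c' ∈ C, frechetDist x c ≤ frechetDist x c' :=
    fun x => Finset.exists_min_image C (fun c' => frechetDist x c') hCne
  choose φ hφmem hφmin using hphiex
  have hpsiex : ∀ x : ℝ → EuclideanSpace ℝ (Fin d),
      ∃ c ∈ Cstar, ∀ c' ∈ Cstar, frechetDist x c ≤ frechetDist x c' :=
    fun x => Finset.exists_min_image Cstar (fun c' => frechetDist x c') hCsne
  choose ψ hψmem hψmin using hpsiex
  have hNDC : ∀ τ, nearestDist C τ = frechetDist τ (φ τ) := by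
    intro τ
    refine le_antisymm (nearestDist_le (hφmem τ) τ) ?_
    obtain ⟨c, hc, hceq⟩ := nearestDist_exists hCne τ
    rw [hceq]
    exact hφmin τ c hc
  have hNDS : ∀ τ, nearestDist Cstar τ = frechetDist τ (ψ τ) := by
    intro τ
    refine le_antisymm (nearestDist_le (hψmem τ) τ) ?_
    obtain ⟨c, hc, hceq⟩ := nearestDist_exists hCsne τ
    rw [hceq]
    exact hψmin τ c hc
  -- degrees and classification
  set deg : (ℝ → EuclideanSpace ℝ (Fin d)) → ℕ :=
    fun c => (Cstar.filter fun cs => φ cs = c).card with hdeg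
  set L := C.filter (fun c => deg c = 0) with hL
  set badS := Cstar.filter (fun cs => deg (φ cs) ≠ 1) with hbadS
  set A1 := C.filter (fun c => deg c = 1) with hA1
  set A2 := C.filter (fun c => 2 ≤ deg c) with hA2
  have hdeg_pos : ∀ cs ∈ Cstar, 1 ≤ deg (φ cs) := by
    intro cs hcs
    rw [hdeg]
    refine Finset.card_pos.mpr ⟨cs, ?_⟩
    simp [Finset.mem_filter, hcs]
  have hsum : ∑ c ∈ C, deg c = k := by
    rw [hdeg, ← Finset.card_eq_sum_card_fiberwise (fun cs hcs => hφmem cs), hCscard]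
  -- badS.card = ∑ c in A2, deg c
  have hbad_maps : ∀ cs ∈ badS, φ cs ∈ A2 := by
    intro cs hcs
    rw [hbadS] at hcs
    obtain ⟨h1, h2⟩ := Finset.mem_filter.mp hcs
    rw [hA2, Finset.mem_filter]
    exact ⟨hφmem cs, by have := hdeg_pos cs h1; omega⟩
  have hbad_card : badS.card = ∑ c ∈ A2, deg c := by
    rw [Finset.card_eq_sum_card_fiberwise hbad_maps]
    refine Finset.sum_congr rfl ?_
    intro c hc
    rw [hdeg]
    congr 1
    ext cs
    simp only [hbadS, Finset.mem_filter, and_assoc]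
    constructor
    · rintro ⟨h1, _, h3⟩; exact ⟨h1, h3⟩
    · rintro ⟨h1, h3⟩
      have hc2 : 2 ≤ deg c := (Finset.mem_filter.mp hc).2
      exact ⟨h1, by rw [h3]; omega, h3⟩
  -- partition counting
  have hdisj12 : Disjoint A1 A2 := by
    rw [Finset.disjoint_left]
    intro c h1 h2
    have := (Finset.mem_filter.mp h1).2
    have := (Finset.mem_filter.mp h2).2
    omega
  have hne1 : C.filter (fun c => ¬ deg c = 0) = A1 ∪ A2 := by
    ext c
    simp only [Finset.mem_filter, Finset.mem_union, hA1, hA2, Finset.mem_filter]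
    constructor
    · rintro ⟨h1, h2⟩
      rcases Nat.lt_or_ge (deg c) 2 with h | h
      · exact Or.inl ⟨h1, by omega⟩
      · exact Or.inr ⟨h1, h⟩
    · rintro (⟨h1, h2⟩ | ⟨h1, h2⟩) <;> exact ⟨h1, by omega⟩
  have hcardC : k = L.card + (A1.card + A2.card) := by
    rw [← hCcard, ← Finset.card_filter_add_card_filter_not (p := fun c => deg c = 0),
      ← hL, hne1, Finset.card_union_of_disjoint hdisj12]
  have hsum_split : A1.card + ∑ c ∈ A2, deg c = k := by
    have h1 : ∑ c ∈ C, deg c =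
        (∑ c ∈ C.filter (fun c => deg c = 0), deg c) +
        ∑ c ∈ C.filter (fun c => ¬ deg c = 0), deg c :=
      (Finset.sum_filter_add_sum_filter_not C _ _).symm
    have h2 : ∑ c ∈ C.filter (fun c => deg c = 0), deg c = 0 := by
      refine Finset.sum_eq_zero ?_
      intro c hc
      exact (Finset.mem_filter.mp hc).2
    have h3 : ∑ c ∈ C.filter (fun c => ¬ deg c = 0), deg c =
        (∑ c ∈ A1, deg c) + ∑ c ∈ A2, deg c := by
      rw [hne1, Finset.sum_union hdisj12]
    have h4 : ∑ c ∈ A1, deg c = A1.card := by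
      rw [Finset.sum_congr rfl (fun c hc => (Finset.mem_filter.mp hc).2), Finset.sum_const,
        smul_eq_mul, mul_one]
    rw [← hsum, h1, h2, h3, h4]
    ring
  have hA2le : 2 * A2.card ≤ ∑ c ∈ A2, deg c := by
    have := Finset.card_nsmul_le_sum A2 deg 2 (fun c hc => (Finset.mem_filter.mp hc).2)
    simpa [mul_comm] using this
  have h2L : badS.card ≤ 2 * L.card := by
    have := hbad_card
    omega
  -- the embedding of bad optimal centers into L × Fin 2
  have hcard_emb : Fintype.card ↥badS ≤ Fintype.card (↥L × Fin 2) := by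
    simp only [Fintype.card_coe, Fintype.card_prod, Fintype.card_fin]
    omega
  obtain ⟨emb⟩ := Function.Embedding.nonempty_of_card_le hcard_emb
  -- the partner map
  set chat : (ℝ → EuclideanSpace ℝ (Fin d)) → (ℝ → EuclideanSpace ℝ (Fin d)) :=
    fun cs => if h : cs ∈ badS then ((emb ⟨cs, h⟩).1 : ℝ → EuclideanSpace ℝ (Fin d)) else φ cs
    with hchat
  have hLsubC : ∀ x : ↥L, (x : ℝ → EuclideanSpace ℝ (Fin d)) ∈ C := by
    intro x
    have := x.2
    simp only [hL] at this
    exact (Finset.mem_filter.mp this).1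
  have hLdeg : ∀ x : ↥L, deg (x : ℝ → EuclideanSpace ℝ (Fin d)) = 0 := by
    intro x
    have := x.2
    simp only [hL] at this
    exact (Finset.mem_filter.mp this).2
  have P1 : ∀ cs ∈ Cstar, chat cs ∈ C := by
    intro cs hcs
    simp only [hchat]
    by_cases h : cs ∈ badS
    · rw [dif_pos h]; exact hLsubC _
    · rw [dif_neg h]; exact hφmem cs
  have P2 : ∀ cs ∈ Cstar, ∀ cs' ∈ Cstar, cs' ≠ cs → φ cs' ≠ chat cs := by
    intro cs hcs cs' hcs' hne heq
    by_cases h : cs ∈ badS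
    · simp only [hchat] at heq
      rw [dif_pos h] at heq
      have hdeg0 : deg (φ cs') = 0 := by rw [heq]; exact hLdeg _
      have := hdeg_pos cs' hcs'
      omega
    · simp only [hchat] at heq
      rw [dif_neg h] at heq
      have hgood : deg (φ cs) = 1 := by
        rw [hbadS] at h
        simp only [Finset.mem_filter, not_and, not_not] at h
        exact h hcs
      have : 2 ≤ deg (φ cs) := by
        rw [hdeg]
        refine Finset.one_lt_card.mpr ?_
        refine ⟨cs', ?_, cs, ?_, hne⟩
        · simp [Finset.mem_filter, hcs', heq]
        · simp [Finset.mem_filter, hcs]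
      omega
  have P3 : ∀ c ∈ C, (Cstar.filter fun cs => chat cs = c).card ≤ 2 := by
    intro c hc
    rcases Nat.lt_or_ge (deg c) 1 with h0 | h1
    · -- deg c = 0 : all elements bad, inject into Fin 2
      have hbadonly : ∀ cs ∈ Cstar.filter (fun cs => chat cs = c), cs ∈ badS := by
        intro cs hcs
        obtain ⟨hcs1, hcs2⟩ := Finset.mem_filter.mp hcs
        by_contra hnb
        simp only [hchat] at hcs2
        rw [dif_neg hnb] at hcs2
        have : deg (φ cs) = 1 := by
          rw [hbadS] at hnb
          simp only [Finset.mem_filter, not_and, not_not] at hnb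
          exact hnb hcs1
        rw [hcs2] at this
        omega
      have : (Cstar.filter fun cs => chat cs = c).card ≤ (Finset.univ : Finset (Fin 2)).card := by
        refine Finset.card_le_card_of_injOn
          (fun cs => if h : cs ∈ badS then (emb ⟨cs, h⟩).2 else 0)
          (fun _ _ => Finset.mem_univ _) ?_
        intro x hx y hy hxy
        have hxb := hbadonly x (Finset.mem_coe.mp hx)
        have hyb := hbadonly y (Finset.mem_coe.mp hy)
        simp only [dif_pos hxb, dif_pos hyb] at hxy
        have hx1 : ((emb ⟨x, hxb⟩).1 : ℝ → EuclideanSpace ℝ (Fin d)) = c := by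
          have := (Finset.mem_filter.mp (Finset.mem_coe.mp hx)).2
          simp only [hchat] at this
          rwa [dif_pos hxb] at this
        have hy1 : ((emb ⟨y, hyb⟩).1 : ℝ → EuclideanSpace ℝ (Fin d)) = c := by
          have := (Finset.mem_filter.mp (Finset.mem_coe.mp hy)).2
          simp only [hchat] at this
          rwa [dif_pos hyb] at this
        have hfst : (emb ⟨x, hxb⟩).1 = (emb ⟨y, hyb⟩).1 :=
          Subtype.ext (hx1.trans hy1.symm)
        have hemb : emb ⟨x, hxb⟩ = emb ⟨y, hyb⟩ := Prod.ext hfst hxy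
        have := emb.injective hemb
        exact Subtype.ext_iff.mp this
      simpa using this
    · rcases Nat.lt_or_ge (deg c) 2 with h2 | h2
      · -- deg c = 1
        have hgoodonly : Cstar.filter (fun cs => chat cs = c) ⊆ Cstar.filter (fun cs => φ cs = c) := by
          intro cs hcs
          obtain ⟨hcs1, hcs2⟩ := Finset.mem_filter.mp hcs
          rw [Finset.mem_filter]
          refine ⟨hcs1, ?_⟩
          by_cases h : cs ∈ badS
          · exfalso
            simp only [hchat] at hcs2
            rw [dif_pos h] at hcs2
            have : deg c = 0 := by rw [← hcs2]; exact hLdeg _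
            omega
          · simp only [hchat] at hcs2
            rwa [dif_neg h] at hcs2
        have := Finset.card_le_card hgoodonly
        have hdc : (Cstar.filter fun cs => φ cs = c).card = deg c := by rw [hdeg]
        omega
      · -- deg c ≥ 2 : empty fiber
        have : Cstar.filter (fun cs => chat cs = c) = ∅ := by
          rw [Finset.eq_empty_iff_forall_notMem]
          intro cs hcs
          obtain ⟨hcs1, hcs2⟩ := Finset.mem_filter.mp hcs
          by_cases h : cs ∈ badS
          · simp only [hchat] at hcs2
            rw [dif_pos h] at hcs2
            have : deg c = 0 := by rw [← hcs2]; exact hLdeg _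
            omega
          · simp only [hchat] at hcs2
            rw [dif_neg h] at hcs2
            have : deg (φ cs) = 1 := by
              rw [hbadS] at h
              simp only [Finset.mem_filter, not_and, not_not] at h
              exact h hcs1
            rw [hcs2] at this
            omega
        rw [this]
        simp
  -- the reassignment cost function
  set g : (ℝ → EuclideanSpace ℝ (Fin d)) → (ℝ → EuclideanSpace ℝ (Fin d)) → ℝ :=
    fun cs τ => if ψ τ = cs then nearestDist Cstar τ
      else if φ τ = chat cs then 2 * nearestDist Cstar τ + nearestDist C τ
      else nearestDist C τ with hg
  -- per-swap inequality
  have hswap : ∀ cs ∈ Cstar,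
      ∑ τ ∈ T, nearestDist C τ ≤ (∑ τ ∈ T, g cs τ) + slack := by
    intro cs hcs
    by_cases hcsC : cs ∈ C
    · -- no swap needed: pointwise bound
      have hpt : ∀ τ ∈ T, nearestDist C τ ≤ g cs τ := by
        intro τ hτ
        simp only [hg]
        by_cases h1 : ψ τ = cs
        · rw [if_pos h1, hNDS τ, h1]
          exact nearestDist_le hcsC τ
        · rw [if_neg h1]
          by_cases h2 : φ τ = chat cs
          · rw [if_pos h2]
            have := nearestDist_nonneg Cstar τ
            linarith
          · rw [if_neg h2]
      have := Finset.sum_le_sum hpt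
      linarith
    · -- swap chat cs out, cs in
      have hloc := hlocal (chat cs) (P1 cs hcs) cs (hCssub hcs) hcsC
      set C' := insert cs (C.erase (chat cs)) with hC'
      have hpt : ∀ τ ∈ T, nearestDist C' τ ≤ g cs τ := by
        intro τ hτ
        simp only [hg]
        by_cases h1 : ψ τ = cs
        · rw [if_pos h1, hNDS τ, h1]
          exact nearestDist_le (Finset.mem_insert_self _ _) τ
        · rw [if_neg h1]
          by_cases h2 : φ τ = chat cs
          · rw [if_pos h2]
            -- reroute through φ (ψ τ)
            set w := φ (ψ τ) with hw
            have hwC : w ∈ C := hφmem (ψ τ)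
            have hwne : w ≠ chat cs := P2 cs hcs (ψ τ) (hψmem τ) h1
            have hwC' : w ∈ C' := Finset.mem_insert_of_mem (Finset.mem_erase.mpr ⟨hwne, hwC⟩)
            have hb1 : IsBddC τ := hAllBdd τ hτ
            have hb2 : IsBddC (ψ τ) := hAllBdd _ (hCssub (hψmem τ))
            have hb3 : IsBddC w := hAllBdd _ (hCsub hwC)
            have hb4 : IsBddC (φ τ) := hAllBdd _ (hCsub (hφmem τ))
            calc nearestDist C' τ ≤ frechetDist τ w := nearestDist_le hwC' τ
              _ ≤ frechetDist τ (ψ τ) + frechetDist (ψ τ) w :=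
                  frechetDist_triangle hb1 hb2 hb3
              _ ≤ frechetDist τ (ψ τ) + frechetDist (ψ τ) (φ τ) := by
                  have := hφmin (ψ τ) (φ τ) (hφmem τ)
                  linarith
              _ ≤ frechetDist τ (ψ τ) + (frechetDist (ψ τ) τ + frechetDist τ (φ τ)) := by
                  have := frechetDist_triangle hb2 hb1 hb4
                  linarith
              _ = 2 * nearestDist Cstar τ + nearestDist C τ := by
                  rw [hNDS τ, hNDC τ, frechetDist_symm (ψ τ) τ]
                  ring
          · rw [if_neg h2]
            have hφC' : φ τ ∈ C' :=
              Finset.mem_insert_of_mem (Finset.mem_erase.mpr ⟨h2, hφmem τ⟩)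
            rw [hNDC τ]
            exact nearestDist_le hφC' τ
      have := Finset.sum_le_sum hpt
      linarith
  -- sum over all optimal centers
  have hinner : ∀ τ ∈ T, ∑ cs ∈ Cstar, g cs τ ≤
      5 * nearestDist Cstar τ + ((k:ℝ) - 1) * nearestDist C τ := by
    intro τ hτ
    have hψτ : ψ τ ∈ Cstar := hψmem τ
    rw [← Finset.add_sum_erase Cstar _ hψτ]
    have hterm : g (ψ τ) τ = nearestDist Cstar τ := by simp only [hg]; simp
    have hrest : ∑ cs ∈ Cstar.erase (ψ τ), g cs τ ≤
        ∑ cs ∈ Cstar.erase (ψ τ),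
          (nearestDist C τ + if φ τ = chat cs then 2 * nearestDist Cstar τ else 0) := by
      refine Finset.sum_le_sum ?_
      intro cs hcs
      have hkne : ψ τ ≠ cs := fun h => (Finset.mem_erase.mp hcs).1 h.symm
      simp only [hg]
      simp only [if_neg hkne]
      by_cases h2 : φ τ = chat cs
      · rw [if_pos h2, if_pos h2]; linarith
      · rw [if_neg h2, if_neg h2]; simp
    have hsplit : ∑ cs ∈ Cstar.erase (ψ τ),
        (nearestDist C τ + if φ τ = chat cs then 2 * nearestDist Cstar τ else 0) =
        (Cstar.erase (ψ τ)).card * nearestDist C τ +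
        ∑ cs ∈ Cstar.erase (ψ τ), (if φ τ = chat cs then 2 * nearestDist Cstar τ else 0) := by
      rw [Finset.sum_add_distrib, Finset.sum_const, nsmul_eq_mul]
    have hcard_er : (Cstar.erase (ψ τ)).card = k - 1 := by
      rw [Finset.card_erase_of_mem hψτ, hCscard]
    have hfilter : ∑ cs ∈ Cstar.erase (ψ τ),
        (if φ τ = chat cs then 2 * nearestDist Cstar τ else 0) ≤
        2 * (2 * nearestDist Cstar τ) := by
      have hsub : (Cstar.erase (ψ τ)).filter (fun cs => φ τ = chat cs) ⊆
          Cstar.filter (fun cs => chat cs = φ τ) := by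
        intro cs hcs
        obtain ⟨h1, h2⟩ := Finset.mem_filter.mp hcs
        exact Finset.mem_filter.mpr ⟨Finset.mem_of_mem_erase h1, h2.symm⟩
      have hcard2 : (((Cstar.erase (ψ τ)).filter (fun cs => φ τ = chat cs)).card : ℝ) ≤ 2 := by
        have := le_trans (Finset.card_le_card hsub) (P3 (φ τ) (hφmem τ))
        exact_mod_cast this
      calc ∑ cs ∈ Cstar.erase (ψ τ), (if φ τ = chat cs then 2 * nearestDist Cstar τ else 0)
          = ∑ cs ∈ (Cstar.erase (ψ τ)).filter (fun cs => φ τ = chat cs),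
              (2 * nearestDist Cstar τ) := (Finset.sum_filter _ _).symm
        _ = (((Cstar.erase (ψ τ)).filter (fun cs => φ τ = chat cs)).card : ℝ) *
              (2 * nearestDist Cstar τ) := by rw [Finset.sum_const, nsmul_eq_mul]
        _ ≤ 2 * (2 * nearestDist Cstar τ) := by
            refine mul_le_mul_of_nonneg_right hcard2 ?_
            have := nearestDist_nonneg Cstar τ
            linarith
    have hcast : ((k - 1 : ℕ) : ℝ) = (k : ℝ) - 1 := by
      rw [Nat.cast_sub hk]
      norm_num
    rw [hterm]
    calc nearestDist Cstar τ + ∑ cs ∈ Cstar.erase (ψ τ), g cs τ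
        ≤ nearestDist Cstar τ + (((Cstar.erase (ψ τ)).card : ℝ) * nearestDist C τ +
          ∑ cs ∈ Cstar.erase (ψ τ), (if φ τ = chat cs then 2 * nearestDist Cstar τ else 0)) := by
          rw [← hsplit]
          linarith [hrest]
      _ ≤ nearestDist Cstar τ + (((k:ℝ) - 1) * nearestDist C τ +
          2 * (2 * nearestDist Cstar τ)) := by
          rw [hcard_er, hcast]
          linarith [hfilter]
      _ = 5 * nearestDist Cstar τ + ((k:ℝ) - 1) * nearestDist C τ := by ring
  -- final assembly
  set cost := ∑ τ ∈ T, nearestDist C τ with hcost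
  set optv := ∑ τ ∈ T, nearestDist Cstar τ with hoptv
  have hsum1 : ∑ cs ∈ Cstar, (cost - slack) ≤ ∑ cs ∈ Cstar, ∑ τ ∈ T, g cs τ := by
    refine Finset.sum_le_sum ?_
    intro cs hcs
    linarith [hswap cs hcs]
  have hlhs : ∑ cs ∈ Cstar, (cost - slack) = (k:ℝ) * (cost - slack) := by
    rw [Finset.sum_const, hCscard, nsmul_eq_mul]
  have hcomm : ∑ cs ∈ Cstar, ∑ τ ∈ T, g cs τ = ∑ τ ∈ T, ∑ cs ∈ Cstar, g cs τ :=
    Finset.sum_comm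
  have hrhs : ∑ τ ∈ T, ∑ cs ∈ Cstar, g cs τ ≤
      5 * optv + ((k:ℝ) - 1) * cost := by
    calc ∑ τ ∈ T, ∑ cs ∈ Cstar, g cs τ
        ≤ ∑ τ ∈ T, (5 * nearestDist Cstar τ + ((k:ℝ) - 1) * nearestDist C τ) :=
          Finset.sum_le_sum hinner
      _ = 5 * optv + ((k:ℝ) - 1) * cost := by
          rw [Finset.sum_add_distrib, ← Finset.mul_sum, ← Finset.mul_sum]
  have hk1 : (1:ℝ) ≤ (k:ℝ) := by exact_mod_cast hk
  have : (k:ℝ) * (cost - slack) ≤ 5 * optv + ((k:ℝ) - 1) * cost := by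
    rw [← hlhs]
    calc ∑ cs ∈ Cstar, (cost - slack) ≤ ∑ cs ∈ Cstar, ∑ τ ∈ T, g cs τ := hsum1
      _ = ∑ τ ∈ T, ∑ cs ∈ Cstar, g cs τ := hcomm
      _ ≤ 5 * optv + ((k:ℝ) - 1) * cost := hrhs
  nlinarith [this, hk1, hslack]


end LSAux

/-- a center-set `C ⊆ T` of size `k` that is locally optimal for the discrete
`k`-median objective with respect to single swaps up to slack `γ·R̂`, where `γ = 1/(3nk)`
and `opt ≤ R̂ ≤ 3n·opt`, is a 6-approximate solution: `cost(T, C) ≤ 6·opt`. -/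
theorem local_search_median_six_approx (d k : ℕ) (hk : 0 < k)
    (T : Finset (ℝ → EuclideanSpace ℝ (Fin d)))
    (n : ℕ) (hn : n = T.card) (hkn : k ≤ n)
    (γ : ℝ) (hγ : γ = 1 / (3 * (n : ℝ) * (k : ℝ)))
    (opt : ℝ)
    (hopt : opt = sInf { r : ℝ | ∃ C : Finset (ℝ → EuclideanSpace ℝ (Fin d)),
      C ⊆ T ∧ C.card = k ∧ r = ∑ τ ∈ T, nearestDist C τ })
    (Rhat : ℝ) (hR1 : opt ≤ Rhat) (hR2 : Rhat ≤ 3 * (n : ℝ) * opt)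
    (C : Finset (ℝ → EuclideanSpace ℝ (Fin d)))
    (hCsub : C ⊆ T) (hCcard : C.card = k)
    (hlocal : ∀ c ∈ C, ∀ τ ∈ T, τ ∉ C →
      ∑ τ' ∈ T, nearestDist C τ' ≤
        ∑ τ' ∈ T, nearestDist (insert τ (C.erase c)) τ' + γ * Rhat) :
    ∑ τ ∈ T, nearestDist C τ ≤ 6 * opt := by
  classical
  have hTcard : k ≤ T.card := hn ▸ hkn
  have hnpos : 0 < n := lt_of_lt_of_le hk hkn
  -- the optimum is attained
  set SS := { r : ℝ | ∃ C' : Finset (ℝ → EuclideanSpace ℝ (Fin d)),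
      C' ⊆ T ∧ C'.card = k ∧ r = ∑ τ ∈ T, nearestDist C' τ } with hSS
  have hSSeq : SS = ↑((T.powersetCard k).image
      (fun C' => ∑ τ ∈ T, nearestDist C' τ)) := by
    ext r
    simp only [hSS, Set.mem_setOf_eq, Finset.coe_image, Set.mem_image, Finset.mem_coe,
      Finset.mem_powersetCard]
    constructor
    · rintro ⟨C', h1, h2, h3⟩; exact ⟨C', ⟨h1, h2⟩, h3.symm⟩
    · rintro ⟨C', ⟨h1, h2⟩, h3⟩; exact ⟨C', h1, h2, h3.symm⟩
  have hSSfin : SS.Finite := by rw [hSSeq]; exact (Finset.finite_toSet _)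
  have hSSne : SS.Nonempty := by
    obtain ⟨C0, hC0sub, hC0card⟩ := Finset.exists_subset_card_eq hTcard
    exact ⟨_, C0, hC0sub, hC0card, rfl⟩
  have hopt_mem : opt ∈ SS := by rw [hopt]; exact hSSne.csInf_mem hSSfin
  have hopt_le : ∀ C' : Finset (ℝ → EuclideanSpace ℝ (Fin d)), C' ⊆ T → C'.card = k →
      opt ≤ ∑ τ ∈ T, nearestDist C' τ := by
    intro C' h1 h2
    rw [hopt]
    exact csInf_le hSSfin.bddBelow ⟨C', h1, h2, rfl⟩
  obtain ⟨Cstar, hCs_sub, hCs_card, hCs_eq⟩ := hopt_mem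
  have hopt_nonneg : 0 ≤ opt := by
    rw [hCs_eq]
    exact Finset.sum_nonneg fun τ _ => nearestDist_nonneg Cstar τ
  have hRnonneg : 0 ≤ Rhat := le_trans hopt_nonneg hR1
  have hγpos : 0 < γ := by
    rw [hγ]
    positivity
  have hslack_nonneg : 0 ≤ γ * Rhat := mul_nonneg hγpos.le hRnonneg
  have hkslack : (k:ℝ) * (γ * Rhat) ≤ opt := by
    rw [hγ]
    have hkpos : (0:ℝ) < k := by exact_mod_cast hk
    have hnpos' : (0:ℝ) < n := by exact_mod_cast hnpos
    have : (k:ℝ) * (1 / (3 * n * k) * Rhat) = Rhat / (3 * n) := by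
      field_simp
    rw [this]
    rw [div_le_iff₀ (by positivity)]
    calc Rhat ≤ 3 * n * opt := hR2
      _ = opt * (3 * n) := by ring
  by_cases hub : ∀ τ ∈ T, IsBddC τ
  · have := arya hk T C Cstar hub hCsub hCcard hCs_sub hCs_card (γ * Rhat)
      hslack_nonneg hlocal
    rw [← hCs_eq] at this
    linarith
  · push_neg at hub
    obtain ⟨u, huT, hu⟩ := hub
    have hzero : ∀ τ : ℝ → EuclideanSpace ℝ (Fin d), frechetDist τ u = 0 :=
      fun τ => frechet_zero_right hu
    -- opt = 0
    obtain ⟨C0, hC0u, hC0sub, hC0card⟩ :=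
      Finset.exists_subsuperset_card_eq (Finset.singleton_subset_iff.mpr huT)
        (by rw [Finset.card_singleton]; exact hk) hTcard
    have huC0 : u ∈ C0 := hC0u (Finset.mem_singleton_self u)
    have hcost0 : ∑ τ ∈ T, nearestDist C0 τ = 0 := by
      refine le_antisymm ?_ (Finset.sum_nonneg fun τ _ => nearestDist_nonneg C0 τ)
      have : ∀ τ ∈ T, nearestDist C0 τ ≤ 0 := by
        intro τ _
        have := nearestDist_le huC0 τ
        rw [hzero τ] at this
        exact this
      calc ∑ τ ∈ T, nearestDist C0 τ ≤ ∑ τ ∈ T, (0:ℝ) := Finset.sum_le_sum this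
        _ = 0 := by simp
    have hopt0 : opt = 0 :=
      le_antisymm (hcost0 ▸ hopt_le C0 hC0sub hC0card) hopt_nonneg
    have hR0 : Rhat = 0 := by
      rw [hopt0] at hR1 hR2
      simp at hR2
      linarith
    rw [hopt0]
    norm_num
    by_cases huC : u ∈ C
    · have : ∀ τ ∈ T, nearestDist C τ ≤ 0 := by
        intro τ _
        have := nearestDist_le huC τ
        rw [hzero τ] at this
        exact this
      calc ∑ τ ∈ T, nearestDist C τ ≤ ∑ τ ∈ T, (0:ℝ) := Finset.sum_le_sum this
        _ = 0 := by simp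
    · have hCne : C.Nonempty := Finset.card_pos.mp (hCcard ▸ hk)
      obtain ⟨c, hc⟩ := hCne
      have hloc := hlocal c hc u huT huC
      rw [hR0] at hloc
      have hC'le : ∀ τ ∈ T, nearestDist (insert u (C.erase c)) τ ≤ 0 := by
        intro τ _
        have := nearestDist_le (Finset.mem_insert_self u (C.erase c)) τ
        rw [hzero τ] at this
        exact this
      have : ∑ τ' ∈ T, nearestDist (insert u (C.erase c)) τ' ≤ 0 := by
        calc ∑ τ' ∈ T, nearestDist (insert u (C.erase c)) τ' ≤ ∑ τ' ∈ T, (0:ℝ) :=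
              Finset.sum_le_sum hC'le
          _ = 0 := by simp
      calc ∑ τ' ∈ T, nearestDist C τ' ≤
            ∑ τ' ∈ T, nearestDist (insert u (C.erase c)) τ' + γ * 0 := hloc
        _ ≤ 0 := by linarith
end
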